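/- arXiv:2003.13426 — 10 statements merged into one kernel-verified Lean document; each statement's English description precedes it below -/
import Mathlib

section
/- Let r₀ > 0 and let p ∈ C²([0,r₀]) satisfy −∫₀^r s² p'(s) ds ≥ 0 for all r ∈ [0,r₀]. Define B_θ(r) = ( −(2/r²) ∫₀^r s² p'(s) ds )^{1/2} for r ∈ (0,r₀]. Then for every r ∈ (0,r₀) the function r ↦ p(r) + B_θ(r)²/2 is differentiable at r with derivative −B_θ(r)²/r; i.e. the pair (p, B_θ) solves the cylindrically symmetric z-pinch equilibrium equation d/dr ( p + (1/2)B_θ² ) = −B_θ²/r. -/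
open Set MeasureTheory

/-!
With `I(r) = ∫₀^r s² p'(s) ds` we have `B_θ² = -2 I / r²`, so `p + B_θ²/2 = p - I / r²`
on `(0, r₀)`. Since `I' = r² p'`, differentiating `I / r²` produces a `p'` that cancels the one
from `p`, and what is left is `2 I / r³ = -B_θ² / r`.
-/

theorem ContinuousOn.hasDerivAt_integral_right {E : Type*} [NormedAddCommGroup E]
    [NormedSpace ℝ E] [CompleteSpace E] {f : ℝ → E} {a b x : ℝ}
    (hf : ContinuousOn f (Icc a b)) (hx : x ∈ Ioo a b) :
    HasDerivAt (fun y => ∫ t in a..y, f t) (f x) x := by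
  have hIcc : Icc a b ∈ nhds x := Icc_mem_nhds hx.1 hx.2
  refine intervalIntegral.integral_hasDerivAt_right ?_
    ⟨Icc a b, hIcc, hf.aestronglyMeasurable measurableSet_Icc⟩ (hf.continuousAt hIcc)
  refine (hf.mono ?_).intervalIntegrable
  rw [uIcc_of_le hx.1.le]
  exact Icc_subset_Icc le_rfl hx.2.le

theorem hasDerivAt_sub_div_sq_of_hasDerivAt_sq_mul {f F : ℝ → ℝ} {f' x : ℝ}
    (hf : HasDerivAt f f' x) (hF : HasDerivAt F (x ^ 2 * f') x) (hx : x ≠ 0) :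
    HasDerivAt (fun s => f s - F s / s ^ 2) (2 * F x / x ^ 3) x := by
  refine (hf.sub (hF.div (hasDerivAt_pow 2 x) (pow_ne_zero 2 hx))).congr_deriv ?_
  field_simp
  ring

theorem zpinch_equilibrium_ode_general
    (r₀ : ℝ)
    (p p' p'' : ℝ → ℝ)
    (hp : ∀ r ∈ Icc (0:ℝ) r₀, HasDerivWithinAt p (p' r) (Icc (0:ℝ) r₀) r)
    (hp' : ∀ r ∈ Icc (0:ℝ) r₀, HasDerivWithinAt p' (p'' r) (Icc (0:ℝ) r₀) r)
    (hint : ∀ r ∈ Icc (0:ℝ) r₀, 0 ≤ -∫ s in (0:ℝ)..r, s ^ 2 * p' s)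
    (Bθ : ℝ → ℝ)
    (hBθ : ∀ r ∈ Ioc (0:ℝ) r₀,
      Bθ r = Real.sqrt (-(2 / r ^ 2) * ∫ s in (0:ℝ)..r, s ^ 2 * p' s)) :
    ∀ r ∈ Ioo (0:ℝ) r₀,
      HasDerivAt (fun s => p s + Bθ s ^ 2 / 2) (-(Bθ r ^ 2) / r) r := by
  intro r hr
  set I : ℝ → ℝ := fun s => ∫ t in (0:ℝ)..s, t ^ 2 * p' t
  have hBθ_sq : ∀ s ∈ Ioo (0:ℝ) r₀, Bθ s ^ 2 = -2 * I s / s ^ 2 := by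
    intro s hs
    rw [hBθ s (Ioo_subset_Ioc_self hs), Real.sq_sqrt]
    · ring
    · have hnegI_nonneg := hint s (Ioo_subset_Icc_self hs)
      rw [neg_mul, ← mul_neg]
      positivity
  have hp'_cont : ContinuousOn p' (Icc 0 r₀) := fun s hs => (hp' s hs).continuousWithinAt
  have hI : HasDerivAt I (r ^ 2 * p' r) r :=
    ((continuousOn_pow 2).mul hp'_cont).hasDerivAt_integral_right hr
  have hp_at : HasDerivAt p (p' r) r :=
    (hp r (Ioo_subset_Icc_self hr)).hasDerivAt (Icc_mem_nhds hr.1 hr.2)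
  have heq : (fun s => p s + Bθ s ^ 2 / 2) =ᶠ[nhds r] fun s => p s - I s / s ^ 2 := by
    filter_upwards [isOpen_Ioo.mem_nhds hr] with s hs
    rw [hBθ_sq s hs]
    ring
  refine ((hasDerivAt_sub_div_sq_of_hasDerivAt_sq_mul hp_at hI hr.1.ne').congr_of_eventuallyEq
    heq).congr_deriv ?_
  rw [hBθ_sq r hr]
  field_simp

/-- part of Lemma 2.1. For an admissible pressure profile `p ∈ C²([0,r₀])`
with `-∫₀^r s² p'(s) ds ≥ 0`, the field `B_θ(r) = (-(2/r²) ∫₀^r s² p'(s) ds)^{1/2}` solves the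
z-pinch equilibrium ODE `d/dr (p + B_θ²/2) = -B_θ²/r` on `(0, r₀)`. -/
theorem zpinch_equilibrium_ode
    (r₀ : ℝ) (hr₀ : 0 < r₀)
    (p p' p'' : ℝ → ℝ)
    (hp : ∀ r ∈ Icc (0:ℝ) r₀, HasDerivWithinAt p (p' r) (Icc (0:ℝ) r₀) r)
    (hp' : ∀ r ∈ Icc (0:ℝ) r₀, HasDerivWithinAt p' (p'' r) (Icc (0:ℝ) r₀) r)
    (hp''c : ContinuousOn p'' (Icc (0:ℝ) r₀))
    (hint : ∀ r ∈ Icc (0:ℝ) r₀, 0 ≤ -∫ s in (0:ℝ)..r, s ^ 2 * p' s)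
    (Bθ : ℝ → ℝ)
    (hBθ : ∀ r ∈ Ioc (0:ℝ) r₀,
      Bθ r = Real.sqrt (-(2 / r ^ 2) * ∫ s in (0:ℝ)..r, s ^ 2 * p' s)) :
    ∀ r ∈ Ioo (0:ℝ) r₀,
      HasDerivAt (fun s => p s + Bθ s ^ 2 / 2) (-(Bθ r ^ 2) / r) r :=
  zpinch_equilibrium_ode_general r₀ p p' p'' hp hp' hint Bθ hBθ
end

section
/- Let r₀ > 0 and let J_z : [0,r₀] → ℝ be continuously differentiable with Lipschitz derivative. Define B_θ(r) = (1/r) ∫₀^r s J_z(s) ds for r ∈ (0,r₀] and p'(r) = −B_θ(r) J_z(r). Then there exists a constant C > 0 such that for all r ∈ (0,r₀]: | p'(r) + (1/2) J_z(0)² r + (5/6) J_z'(0) J_z(0) r² | ≤ C r³. -/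
open Set MeasureTheory

set_option maxHeartbeats 1200000

/-- second Taylor expansion in Lemma 2.3. If `J_z ∈ C¹([0,r₀])` has a
Lipschitz derivative, `B_θ(r) = (1/r) ∫₀^r s J_z(s) ds` and `p'(r) = -B_θ(r) J_z(r)`, then
`|p'(r) + (1/2) J_z(0)² r + (5/6) J_z'(0) J_z(0) r²| ≤ C r³` on `(0, r₀]`. -/
theorem zpinch_pressure_gradient_taylor
    (r₀ : ℝ) (hr₀ : 0 < r₀)
    (Jz Jz' : ℝ → ℝ) (L : NNReal)
    (hJ : ∀ r ∈ Icc (0:ℝ) r₀, HasDerivWithinAt Jz (Jz' r) (Icc (0:ℝ) r₀) r)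
    (hJ'lip : LipschitzOnWith L Jz' (Icc (0:ℝ) r₀))
    (Bθ p' : ℝ → ℝ)
    (hBθ : ∀ r ∈ Ioc (0:ℝ) r₀, Bθ r = (1 / r) * ∫ s in (0:ℝ)..r, s * Jz s)
    (hp' : ∀ r ∈ Ioc (0:ℝ) r₀, p' r = -(Bθ r * Jz r)) :
    ∃ C > 0, ∀ r ∈ Ioc (0:ℝ) r₀,
      |p' r + (1/2) * (Jz 0) ^ 2 * r + (5/6) * Jz' 0 * Jz 0 * r ^ 2| ≤ C * r ^ 3 := by
  have h0 : (0:ℝ) ∈ Icc (0:ℝ) r₀ := ⟨le_rfl, hr₀.le⟩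
  -- Taylor remainder bound for Jz
  have hE : ∀ s ∈ Icc (0:ℝ) r₀, |Jz s - Jz 0 - Jz' 0 * s| ≤ L * s ^ 2 := by
    intro s hs
    have hsub : Icc (0:ℝ) s ⊆ Icc (0:ℝ) r₀ := Icc_subset_Icc le_rfl hs.2
    have hg : ∀ x ∈ Icc (0:ℝ) s,
        HasDerivWithinAt (fun x => Jz x - Jz' 0 * x) (Jz' x - Jz' 0) (Icc (0:ℝ) s) x := by
      intro x hx
      exact ((hJ x (hsub hx)).mono hsub).sub
        ((hasDerivWithinAt_id x _).const_mul (Jz' 0) |>.congr_deriv (by ring))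
    have hbound : ∀ x ∈ Icc (0:ℝ) s, ‖Jz' x - Jz' 0‖ ≤ L * s := by
      intro x hx
      have := hJ'lip.dist_le_mul x (hsub hx) 0 h0
      simp only [Real.dist_eq, sub_zero] at this
      calc ‖Jz' x - Jz' 0‖ = |Jz' x - Jz' 0| := rfl
        _ ≤ L * |x| := this
        _ ≤ L * s := by
            have : |x| ≤ s := by rw [abs_of_nonneg hx.1]; exact hx.2
            exact mul_le_mul_of_nonneg_left this L.coe_nonneg
    have := Convex.norm_image_sub_le_of_norm_hasDerivWithin_le hg hbound
      (convex_Icc _ _) (left_mem_Icc.2 hs.1) (right_mem_Icc.2 hs.1)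
    simp only [Real.norm_eq_abs, sub_zero] at this
    have habs : |s| = s := abs_of_nonneg hs.1
    calc |Jz s - Jz 0 - Jz' 0 * s|
        = |(Jz s - Jz' 0 * s) - (Jz 0 - Jz' 0 * 0)| := by ring_nf
      _ ≤ L * s * |s| := this
      _ = L * s ^ 2 := by rw [habs]; ring
  -- continuity
  have hJcont : ContinuousOn Jz (Icc (0:ℝ) r₀) := fun x hx =>
    (hJ x hx).continuousWithinAt
  set M1 : ℝ := |Jz 0| / 2 + |Jz' 0| * r₀ / 3 with hM1
  set M2 : ℝ := |Jz 0| + |Jz' 0| * r₀ with hM2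
  refine ⟨|Jz' 0| ^ 2 / 3 + M1 * L + L * M2 + L ^ 2 * r₀ ^ 2 + 1, by positivity, ?_⟩
  intro r hr
  have hr0 : 0 < r := hr.1
  have hrr0 : r ≤ r₀ := hr.2
  have hrIcc : Icc (0:ℝ) r ⊆ Icc (0:ℝ) r₀ := Icc_subset_Icc le_rfl hrr0
  -- estimate on Bθ
  have hint : IntervalIntegrable (fun s => s * Jz s) volume 0 r := by
    apply ContinuousOn.intervalIntegrable
    rw [uIcc_of_le hr0.le]
    exact continuousOn_id.mul (hJcont.mono hrIcc)
  have hint2 : IntervalIntegrable (fun s => Jz 0 * s + Jz' 0 * s ^ 2) volume 0 r :=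
    (Continuous.intervalIntegrable (by continuity) 0 r)
  have hpoly : ∫ s in (0:ℝ)..r, (Jz 0 * s + Jz' 0 * s ^ 2)
      = Jz 0 * r ^ 2 / 2 + Jz' 0 * r ^ 3 / 3 := by
    have hid : ∫ s in (0:ℝ)..r, s = r ^ 2 / 2 := by
      norm_num [integral_id]
    have hsq : ∫ s in (0:ℝ)..r, s ^ 2 = r ^ 3 / 3 := by
      norm_num [integral_pow]
    rw [intervalIntegral.integral_add ((Continuous.intervalIntegrable (by continuity) 0 r))
      ((Continuous.intervalIntegrable (by continuity) 0 r)),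
      intervalIntegral.integral_const_mul, intervalIntegral.integral_const_mul, hid, hsq]
    ring
  have hRint : |∫ s in (0:ℝ)..r, (s * Jz s - (Jz 0 * s + Jz' 0 * s ^ 2))| ≤ L * r ^ 3 * r := by
    have : ∀ s ∈ Set.uIoc (0:ℝ) r, ‖s * Jz s - (Jz 0 * s + Jz' 0 * s ^ 2)‖ ≤ L * r ^ 3 := by
      intro s hs
      rw [uIoc_of_le hr0.le] at hs
      have hs' : s ∈ Icc (0:ℝ) r₀ := ⟨hs.1.le, hs.2.trans hrr0⟩
      have heq : s * Jz s - (Jz 0 * s + Jz' 0 * s ^ 2) = s * (Jz s - Jz 0 - Jz' 0 * s) := by ring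
      rw [Real.norm_eq_abs, heq, abs_mul, abs_of_nonneg hs.1.le]
      calc s * |Jz s - Jz 0 - Jz' 0 * s| ≤ s * (L * s ^ 2) := by
            exact mul_le_mul_of_nonneg_left (hE s hs') hs.1.le
        _ ≤ r * (L * r ^ 2) := by
            have h3 : s ^ 3 ≤ r ^ 3 := pow_le_pow_left₀ hs.1.le hs.2 3
            have hL : (0:ℝ) ≤ L := L.coe_nonneg
            nlinarith
        _ = L * r ^ 3 := by ring
    have := intervalIntegral.norm_integral_le_of_norm_le_const this
    simpa [Real.norm_eq_abs, abs_of_nonneg hr0.le] using this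
  set A : ℝ := Jz 0 * r / 2 + Jz' 0 * r ^ 2 / 3 with hA
  set e1 : ℝ := Bθ r - A with he1def
  set e2 : ℝ := Jz r - (Jz 0 + Jz' 0 * r) with he2def
  have he1 : |e1| ≤ L * r ^ 3 := by
    have hBr := hBθ r hr
    have hsplit : ∫ s in (0:ℝ)..r, s * Jz s
        = (Jz 0 * r ^ 2 / 2 + Jz' 0 * r ^ 3 / 3)
          + ∫ s in (0:ℝ)..r, (s * Jz s - (Jz 0 * s + Jz' 0 * s ^ 2)) := by
      rw [intervalIntegral.integral_sub hint hint2, hpoly]; ring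
    have : e1 = (1 / r) * ∫ s in (0:ℝ)..r, (s * Jz s - (Jz 0 * s + Jz' 0 * s ^ 2)) := by
      rw [he1def, hBr, hsplit, hA]
      field_simp
      ring
    rw [this, abs_mul, abs_of_nonneg (by positivity : (0:ℝ) ≤ 1 / r)]
    calc 1 / r * |∫ s in (0:ℝ)..r, (s * Jz s - (Jz 0 * s + Jz' 0 * s ^ 2))|
        ≤ 1 / r * (L * r ^ 3 * r) := by
          exact mul_le_mul_of_nonneg_left hRint (by positivity)
      _ = L * r ^ 3 := by field_simp
  have he2 : |e2| ≤ L * r ^ 2 := by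
    have := hE r ⟨hr0.le, hrr0⟩
    calc |e2| = |Jz r - Jz 0 - Jz' 0 * r| := by rw [he2def]; ring_nf
      _ ≤ L * r ^ 2 := this
  have hAbound : |A| ≤ M1 * r := by
    rw [hA, hM1]
    calc |Jz 0 * r / 2 + Jz' 0 * r ^ 2 / 3|
        ≤ |Jz 0 * r / 2| + |Jz' 0 * r ^ 2 / 3| := abs_add_le _ _
      _ = |Jz 0| * r / 2 + |Jz' 0| * r ^ 2 / 3 := by
          rw [abs_div, abs_div, abs_mul, abs_mul, abs_of_nonneg hr0.le,
            abs_of_nonneg (by positivity : (0:ℝ) ≤ r ^ 2)]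
          norm_num
      _ ≤ |Jz 0| * r / 2 + |Jz' 0| * (r₀ * r) / 3 := by
          gcongr
          nlinarith
      _ = (|Jz 0| / 2 + |Jz' 0| * r₀ / 3) * r := by ring
  have hBbound : |Jz 0 + Jz' 0 * r| ≤ M2 := by
    rw [hM2]
    calc |Jz 0 + Jz' 0 * r| ≤ |Jz 0| + |Jz' 0 * r| := abs_add_le _ _
      _ ≤ |Jz 0| + |Jz' 0| * r₀ := by
          rw [abs_mul, abs_of_nonneg hr0.le]
          have := mul_le_mul_of_nonneg_left hrr0 (abs_nonneg (Jz' 0))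
          linarith
  have hM1nn : (0:ℝ) ≤ M1 := by rw [hM1]; positivity
  -- main algebraic identity
  have hmain : p' r + (1/2) * (Jz 0) ^ 2 * r + (5/6) * Jz' 0 * Jz 0 * r ^ 2
      = -(Jz' 0 ^ 2 / 3 * r ^ 3 + A * e2 + e1 * (Jz 0 + Jz' 0 * r) + e1 * e2) := by
    have hBr : Bθ r = A + e1 := by rw [he1def]; ring
    have hJr : Jz r = (Jz 0 + Jz' 0 * r) + e2 := by rw [he2def]; ring
    rw [hp' r hr, hBr, hJr, hA]; ring
  rw [hmain, abs_neg]
  have habs : |Jz' 0 ^ 2 / 3 * r ^ 3 + A * e2 + e1 * (Jz 0 + Jz' 0 * r) + e1 * e2|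
      ≤ |Jz' 0 ^ 2 / 3 * r ^ 3| + |A * e2| + |e1 * (Jz 0 + Jz' 0 * r)| + |e1 * e2| := by
    calc |Jz' 0 ^ 2 / 3 * r ^ 3 + A * e2 + e1 * (Jz 0 + Jz' 0 * r) + e1 * e2|
        ≤ |Jz' 0 ^ 2 / 3 * r ^ 3 + A * e2 + e1 * (Jz 0 + Jz' 0 * r)| + |e1 * e2| :=
          abs_add_le _ _
      _ ≤ |Jz' 0 ^ 2 / 3 * r ^ 3 + A * e2| + |e1 * (Jz 0 + Jz' 0 * r)| + |e1 * e2| := by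
          linarith [abs_add_le (Jz' 0 ^ 2 / 3 * r ^ 3 + A * e2) (e1 * (Jz 0 + Jz' 0 * r))]
      _ ≤ |Jz' 0 ^ 2 / 3 * r ^ 3| + |A * e2| + |e1 * (Jz 0 + Jz' 0 * r)| + |e1 * e2| := by
          linarith [abs_add_le (Jz' 0 ^ 2 / 3 * r ^ 3) (A * e2)]
  refine habs.trans ?_
  have h1 : |Jz' 0 ^ 2 / 3 * r ^ 3| = |Jz' 0| ^ 2 / 3 * r ^ 3 := by
    rw [abs_mul, abs_div, abs_pow, sq_abs, abs_of_nonneg (by positivity : (0:ℝ) ≤ r ^ 3)]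
    norm_num
  have h2 : |A * e2| ≤ M1 * L * r ^ 3 := by
    rw [abs_mul]
    calc |A| * |e2| ≤ (M1 * r) * (L * r ^ 2) :=
        mul_le_mul hAbound he2 (abs_nonneg _) (mul_nonneg hM1nn hr0.le)
      _ = M1 * L * r ^ 3 := by ring
  have h3 : |e1 * (Jz 0 + Jz' 0 * r)| ≤ L * M2 * r ^ 3 := by
    rw [abs_mul]
    calc |e1| * |Jz 0 + Jz' 0 * r| ≤ (L * r ^ 3) * M2 :=
        mul_le_mul he1 hBbound (abs_nonneg _) (by positivity)
      _ = L * M2 * r ^ 3 := by ring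
  have h4 : |e1 * e2| ≤ L ^ 2 * r₀ ^ 2 * r ^ 3 := by
    rw [abs_mul]
    calc |e1| * |e2| ≤ (L * r ^ 3) * (L * r ^ 2) :=
        mul_le_mul he1 he2 (abs_nonneg _) (by positivity)
      _ ≤ (L * r ^ 3) * (L * r₀ ^ 2) := by
          gcongr
      _ = L ^ 2 * r₀ ^ 2 * r ^ 3 := by ring
  rw [h1]
  have hr3 : (0:ℝ) < r ^ 3 := by positivity
  have expand : (|Jz' 0| ^ 2 / 3 + M1 * (L:ℝ) + (L:ℝ) * M2 + (L:ℝ) ^ 2 * r₀ ^ 2 + 1) * r ^ 3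
      = |Jz' 0| ^ 2 / 3 * r ^ 3 + M1 * (L:ℝ) * r ^ 3 + (L:ℝ) * M2 * r ^ 3
        + (L:ℝ) ^ 2 * r₀ ^ 2 * r ^ 3 + r ^ 3 := by ring
  clear_value M1 M2 A e1 e2
  linarith [h2, h3, h4, hr3, expand]
end

section
/- Let r₀ > 0 and γ > 1. Let p : [0,r₀] → ℝ be continuously differentiable with p(r) ≥ 0 for all r ∈ [0,r₀] and p(r) = 0 if and only if r = r₀, and let B_θ : [0,r₀] → ℝ be any function. Then there exists r* ∈ (0,r₀) such that p'(r*) + 2 γ p(r*) B_θ(r*)² / ( r* ( γ p(r*) + B_θ(r*)² ) ) < 0. -/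
open Set

/-- Lemma 2.4, unconditional `m = 0` instability criterion. For any `γ > 1`,
any `p ∈ C¹([0,r₀])` with `p ≥ 0` vanishing exactly at `r₀`, and any function `B_θ`, there is
`r* ∈ (0,r₀)` where `p'(r*) + 2γ p(r*) B_θ(r*)² / (r*(γ p(r*) + B_θ(r*)²)) < 0`. -/
theorem zpinch_sausage_instability_criterion
    (r₀ γ : ℝ) (hr₀ : 0 < r₀) (hγ : 1 < γ)
    (p p' Bθ : ℝ → ℝ)
    (hp : ∀ r ∈ Icc (0:ℝ) r₀, HasDerivWithinAt p (p' r) (Icc (0:ℝ) r₀) r)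
    (hp'c : ContinuousOn p' (Icc (0:ℝ) r₀))
    (hpnn : ∀ r ∈ Icc (0:ℝ) r₀, 0 ≤ p r)
    (hpz : ∀ r ∈ Icc (0:ℝ) r₀, (p r = 0 ↔ r = r₀)) :
    ∃ r ∈ Ioo (0:ℝ) r₀,
      p' r + 2 * γ * p r * (Bθ r) ^ 2 / (r * (γ * p r + (Bθ r) ^ 2)) < 0 := by
  set n : ℕ := ⌈2*γ⌉₊ with hn
  have h2γ : (2:ℝ)*γ ≤ n := Nat.le_ceil _
  have ha : (0:ℝ) < r₀/2 := by linarith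
  have hab : r₀/2 < r₀ := by linarith
  have hsub : Icc (r₀/2) r₀ ⊆ Icc 0 r₀ := Icc_subset_Icc (le_of_lt ha) le_rfl
  have hpc : ContinuousOn p (Icc 0 r₀) := fun x hx => (hp x hx).continuousWithinAt
  have hfc : ContinuousOn (fun r => r ^ n * p r) (Icc (r₀/2) r₀) :=
    (continuous_pow n).continuousOn.mul (hpc.mono hsub)
  have hderiv : ∀ x ∈ Ioo (r₀/2) r₀,
      HasDerivAt (fun r => r ^ n * p r)
        ((n : ℝ) * x ^ (n - 1) * p x + x ^ n * p' x) x := by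
    intro x hx
    have hxmem : x ∈ Icc (0:ℝ) r₀ := ⟨by linarith [hx.1], le_of_lt hx.2⟩
    have hnh : Icc (0:ℝ) r₀ ∈ nhds x :=
      Icc_mem_nhds (by linarith [hx.1]) hx.2
    have hpd : HasDerivAt p (p' x) x := (hp x hxmem).hasDerivAt hnh
    exact (hasDerivAt_pow n x).mul hpd
  obtain ⟨c, hc, hceq⟩ := exists_hasDerivAt_eq_slope (fun r => r ^ n * p r)
    (fun x => (n : ℝ) * x ^ (n - 1) * p x + x ^ n * p' x) hab hfc hderiv
  have hcpos : 0 < c := lt_trans ha hc.1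
  have hcmem : c ∈ Icc (0:ℝ) r₀ := ⟨le_of_lt hcpos, le_of_lt hc.2⟩
  have hpa : 0 < p (r₀/2) := by
    have hmem : (r₀/2) ∈ Icc (0:ℝ) r₀ := ⟨le_of_lt ha, le_of_lt hab⟩
    have := hpnn _ hmem
    rcases this.lt_or_eq with h | h
    · exact h
    · exact absurd ((hpz _ hmem).mp h.symm) (ne_of_lt hab)
  have hpr₀ : p r₀ = 0 := (hpz r₀ ⟨le_of_lt hr₀, le_rfl⟩).mpr rfl
  have hslope : ((n : ℝ) * c ^ (n - 1) * p c + c ^ n * p' c) < 0 := by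
    rw [hceq]
    apply div_neg_of_neg_of_pos _ (by linarith)
    have h1 : (0:ℝ) < (r₀/2) ^ n * p (r₀/2) := by positivity
    simp only [hpr₀, mul_zero]
    linarith
  have hn2 : 1 ≤ n := by
    have : (1:ℝ) ≤ (n:ℝ) := by linarith
    exact_mod_cast this
  have hcn : c ^ n = c ^ (n - 1) * c := by
    rw [← pow_succ, Nat.sub_add_cancel hn2]
  have hcn1 : (0:ℝ) < c ^ (n - 1) := pow_pos hcpos _
  -- divide the key inequality by c^(n-1)
  have hkey : (n : ℝ) * p c + c * p' c < 0 := by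
    have : c ^ (n - 1) * ((n : ℝ) * p c + c * p' c) < 0 := by
      rw [hcn] at hslope; nlinarith [hslope]
    nlinarith [this, hcn1]
  have hpcpos : 0 < p c := by
    rcases (hpnn c hcmem).lt_or_eq with h | h
    · exact h
    · exact absurd ((hpz c hcmem).mp h.symm) (ne_of_lt hc.2)
  have hD : 0 < γ * p c + (Bθ c) ^ 2 := by
    have h1 : 0 < γ * p c := mul_pos (by linarith) hpcpos
    nlinarith [sq_nonneg (Bθ c)]
  refine ⟨c, ⟨hcpos, hc.2⟩, ?_⟩
  have hT : 2 * γ * p c * (Bθ c) ^ 2 / (c * (γ * p c + (Bθ c) ^ 2)) ≤ (n : ℝ) * p c / c := by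
    rw [div_le_div_iff₀ (by positivity) hcpos]
    have hγpos : (0:ℝ) < γ := by linarith
    nlinarith [mul_nonneg (mul_nonneg (sub_nonneg.mpr h2γ) (mul_nonneg hpcpos.le hcpos.le)) hD.le,
      mul_nonneg (mul_nonneg (mul_pos hγpos hpcpos).le hcpos.le) (mul_pos hγpos hpcpos).le]
  have h2 : p' c + (n : ℝ) * p c / c < 0 := by
    have heq : p' c + (n : ℝ) * p c / c = ((n : ℝ) * p c + c * p' c) / c := by
      field_simp; ring
    rw [heq]
    exact div_neg_of_neg_of_pos hkey hcpos
  linarith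
end

section
/- Let r₀ > 0 and let J_z : [0,r₀] → [0,∞) be continuous and non-increasing. Define B_θ(r) = (1/r) ∫₀^r s J_z(s) ds for r ∈ (0,r₀] and p'(r) = −B_θ(r) J_z(r). Then for every integer m with |m| ≥ 2 and every r ∈ (0,r₀]: 2 p'(r) + m² B_θ(r)² / r ≥ 0. -/
open Set MeasureTheory

/-- Lemma 2.5, absence of the instability criterion for `|m| ≥ 2` when the
axial current is non-negative and non-increasing. With `B_θ(r) = (1/r) ∫₀^r s J_z(s) ds` and
`p'(r) = -B_θ(r) J_z(r)`, one has `2 p'(r) + m² B_θ(r)²/r ≥ 0` on `(0, r₀]`. -/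
theorem zpinch_no_instability_criterion_m_ge_two
    (r₀ : ℝ) (hr₀ : 0 < r₀)
    (Jz : ℝ → ℝ)
    (hJc : ContinuousOn Jz (Icc (0:ℝ) r₀))
    (hJnn : ∀ r ∈ Icc (0:ℝ) r₀, 0 ≤ Jz r)
    (hJanti : AntitoneOn Jz (Icc (0:ℝ) r₀))
    (Bθ p' : ℝ → ℝ)
    (hBθ : ∀ r ∈ Ioc (0:ℝ) r₀, Bθ r = (1 / r) * ∫ s in (0:ℝ)..r, s * Jz s)
    (hp' : ∀ r ∈ Ioc (0:ℝ) r₀, p' r = -(Bθ r * Jz r)) :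
    ∀ m : ℤ, 2 ≤ |m| → ∀ r ∈ Ioc (0:ℝ) r₀,
      0 ≤ 2 * p' r + (m:ℝ) ^ 2 * (Bθ r) ^ 2 / r := by
  intro m hm r hr
  obtain ⟨hr0, hrr₀⟩ := hr
  have hrmem : r ∈ Icc (0:ℝ) r₀ := ⟨hr0.le, hrr₀⟩
  have hJr0 : 0 ≤ Jz r := hJnn r hrmem
  set I : ℝ := ∫ s in (0:ℝ)..r, s * Jz s with hI
  have hsub : Icc (0:ℝ) r ⊆ Icc (0:ℝ) r₀ := Icc_subset_Icc le_rfl hrr₀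
  have hint1 : IntervalIntegrable (fun s => s * Jz s) volume 0 r := by
    apply ContinuousOn.intervalIntegrable
    rw [uIcc_of_le hr0.le]
    exact continuousOn_id.mul (hJc.mono hsub)
  have hint2 : IntervalIntegrable (fun s => s * Jz r) volume 0 r := by
    apply ContinuousOn.intervalIntegrable
    exact (continuous_id.mul continuous_const).continuousOn
  have hI0 : 0 ≤ I := by
    apply intervalIntegral.integral_nonneg hr0.le
    intro s hs
    exact mul_nonneg hs.1 (hJnn s (hsub ⟨hs.1, hs.2⟩))
  have hIge : r ^ 2 / 2 * Jz r ≤ I := by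
    have h1 : (∫ s in (0:ℝ)..r, s * Jz r) ≤ I := by
      apply intervalIntegral.integral_mono_on hr0.le hint2 hint1
      intro s hs
      exact mul_le_mul_of_nonneg_left (hJanti ⟨hs.1, hs.2.trans hrr₀⟩ hrmem hs.2) hs.1
    calc r ^ 2 / 2 * Jz r = ∫ s in (0:ℝ)..r, s * Jz r := by
          rw [intervalIntegral.integral_mul_const, integral_id]; ring
      _ ≤ I := h1
  have hm2 : (2:ℝ) ≤ |(m:ℝ)| := by
    rw [← Int.cast_abs]; exact_mod_cast hm
  have hm4 : (4:ℝ) ≤ (m:ℝ) ^ 2 := by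
    have := pow_le_pow_left₀ (by norm_num : (0:ℝ) ≤ 2) hm2 2
    norm_num [sq_abs] at this; linarith
  have key : 0 ≤ (m:ℝ) ^ 2 * I ^ 2 - 2 * I * Jz r * r ^ 2 := by
    nlinarith [mul_nonneg hI0 (sub_nonneg.2 hIge),
      mul_nonneg (sub_nonneg.2 hm4) (sq_nonneg I)]
  rw [hp' r ⟨hr0, hrr₀⟩, hBθ r ⟨hr0, hrr₀⟩, ← hI]
  have heq : 2 * -((1 / r) * I * Jz r) + (m:ℝ) ^ 2 * ((1 / r) * I) ^ 2 / r
      = ((m:ℝ) ^ 2 * I ^ 2 - 2 * I * Jz r * r ^ 2) / r ^ 3 := by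
    field_simp
    ring
  rw [heq]
  exact div_nonneg key (by positivity)
end

section
/- Let r₀ > 0, let m be an integer with |m| ≥ 2, and set α = (m² − 2)/2. Let β > α and let J_z : [0,r₀] → ℝ be continuous with |J_z(r)| ≤ C r^β for all r ∈ [0,r₀] and some constant C > 0. Define B_θ(r) = (1/r) ∫₀^r s J_z(s) ds for r ∈ (0,r₀] and p'(r) = −B_θ(r) J_z(r), and suppose B_θ(r) ≠ 0 for all r ∈ (0,r₀] (i.e. B_θ has a sign on (0,r₀]). Then there exists r* ∈ (0,r₀) such that 2 p'(r*) + m² B_θ(r*)² / r* < 0. -/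
/-!
Write `F r = ∫₀^r s J_z(s) ds = r B_θ(r)`. If `2 p' + m² B_θ² / r ≥ 0` held on all of `(0, r₀)`,
then `2 r F F' ≤ m² F²` there, so `F² / r^{m²}` would be nonincreasing on `(0, r₀]`. The decay
`|J_z| ≤ C r^β` gives `|F| ≤ C r^{β+2} / (β+2)`, hence `F² / r^{m²} = O(r^{2β+4-m²}) → 0` as
`r → 0⁺` because `2β + 4 - m² > 2`. Monotonicity then forces `F(r₀) = 0`, i.e. `B_θ(r₀) = 0`.
-/

open Set MeasureTheory Filter Topology intervalIntegral

theorem hasDerivAt_integral_of_continuousOn {f : ℝ → ℝ} {a b x : ℝ}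
    (hf : ContinuousOn f (Icc a b)) (hx : x ∈ Ioo a b) :
    HasDerivAt (fun r => ∫ s in a..r, f s) (f x) x := by
  have hcont : ∀ y ∈ Ioo a b, ContinuousAt f y :=
    fun y hy => hf.continuousAt (Icc_mem_nhds hy.1 hy.2)
  refine integral_hasDerivAt_right ?_
    (ContinuousAt.stronglyMeasurableAtFilter isOpen_Ioo hcont x hx) (hcont x hx)
  exact (hf.mono (Icc_subset_Icc le_rfl hx.2.le)).intervalIntegrable_of_Icc hx.1.le

theorem abs_integral_le_of_abs_le_rpow {f : ℝ → ℝ} {C γ r : ℝ} (hγ : -1 < γ) (hr : 0 ≤ r)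
    (hf : ∀ s ∈ Ioc 0 r, |f s| ≤ C * s ^ γ) :
    |∫ s in 0..r, f s| ≤ C / (γ + 1) * r ^ (γ + 1) := by
  calc |∫ s in 0..r, f s| ≤ ∫ s in 0..r, C * s ^ γ := by
        simpa only [Real.norm_eq_abs] using norm_integral_le_of_norm_le (f := f) hr
          (ae_of_all _ hf) ((intervalIntegrable_rpow' hγ).const_mul C)
    _ = C / (γ + 1) * r ^ (γ + 1) := by
        rw [intervalIntegral.integral_const_mul, integral_rpow (Or.inl hγ),
          Real.zero_rpow (by linarith)]
        ring

theorem abs_integral_mul_le_of_abs_le_rpow {J : ℝ → ℝ} {C β r : ℝ} (hβ : -2 < β) (hr : 0 ≤ r)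
    (hJ : ∀ s ∈ Ioc 0 r, |J s| ≤ C * s ^ β) :
    |∫ s in 0..r, s * J s| ≤ C / (β + 2) * r ^ (β + 2) := by
  have hbound : ∀ s ∈ Ioc 0 r, |s * J s| ≤ C * s ^ (β + 1) := by
    intro s hs
    calc |s * J s| = s * |J s| := by rw [abs_mul, abs_of_pos hs.1]
      _ ≤ s * (C * s ^ β) := mul_le_mul_of_nonneg_left (hJ s hs) hs.1.le
      _ = C * s ^ (β + 1) := by rw [Real.rpow_add_one hs.1.ne']; ring
  simpa only [add_assoc, one_add_one_eq_two] using
    abs_integral_le_of_abs_le_rpow (by linarith) hr hbound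

theorem antitoneOn_sq_div_rpow {F f : ℝ → ℝ} {b c : ℝ} (hF : ContinuousOn F (Ioc 0 b))
    (hderiv : ∀ x ∈ Ioo 0 b, HasDerivAt F (f x) x)
    (hle : ∀ x ∈ Ioo 0 b, 2 * x * F x * f x ≤ c * F x ^ 2) :
    AntitoneOn (fun x => F x ^ 2 / x ^ c) (Ioc 0 b) := by
  have hpow_ne : ∀ x ∈ Ioc (0 : ℝ) b, x ^ c ≠ 0 := fun x hx => (Real.rpow_pos_of_pos hx.1 c).ne'
  refine antitoneOn_of_hasDerivWithinAt_nonpos (convex_Ioc 0 b)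
    ((hF.pow 2).div (continuousOn_id.rpow_const fun x hx => Or.inl hx.1.ne') hpow_ne)
    (f' := fun x => (2 * F x * f x * x ^ c - F x ^ 2 * (c * x ^ (c - 1))) / (x ^ c) ^ 2)
    (fun x hx => ?_) (fun x hx => ?_) <;> rw [interior_Ioc] at hx
  · have hsq : HasDerivAt (fun x => F x ^ 2) (2 * F x * f x) x := by
      simpa using (hderiv x hx).fun_pow 2
    exact (hsq.div (Real.hasDerivAt_rpow_const (Or.inl hx.1.ne'))
      (hpow_ne x (Ioo_subset_Ioc_self hx))).hasDerivWithinAt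
  · -- the numerator of the derivative is `x ^ (c - 1) * (2 x F f - c F²)`
    have hsplit : x ^ c = x * x ^ (c - 1) := by
      rw [mul_comm, ← Real.rpow_add_one hx.1.ne']; ring_nf
    have key := mul_le_mul_of_nonneg_left (hle x hx) (Real.rpow_pos_of_pos hx.1 (c - 1)).le
    refine div_nonpos_of_nonpos_of_nonneg ?_ (sq_nonneg _)
    rw [hsplit]
    nlinarith

theorem tendsto_sq_div_rpow_nhdsGT_zero {F : ℝ → ℝ} {b K γ c : ℝ} (hb : 0 < b) (hc : c < 2 * γ)
    (hF : ∀ x ∈ Ioo 0 b, |F x| ≤ K * x ^ γ) :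
    Tendsto (fun x => F x ^ 2 / x ^ c) (𝓝[>] 0) (𝓝 0) := by
  have hlim : Tendsto (fun x : ℝ => K ^ 2 * x ^ (2 * γ - c)) (𝓝[>] 0) (𝓝 0) := by
    have := ((Real.continuousAt_rpow_const 0 (2 * γ - c) (Or.inr (by linarith))).tendsto.const_mul
      (K ^ 2)).mono_left (nhdsWithin_le_nhds (s := Ioi 0))
    simpa [Real.zero_rpow (by linarith : 2 * γ - c ≠ 0)] using this
  have hmem : Ioo 0 b ∈ 𝓝[>] (0 : ℝ) := Ioo_mem_nhdsGT hb
  refine tendsto_of_tendsto_of_tendsto_of_le_of_le' tendsto_const_nhds hlim ?_ ?_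
  · filter_upwards [hmem] with x hx
    have := hx.1
    positivity
  · filter_upwards [hmem] with x hx
    have hsq : F x ^ 2 ≤ (K * x ^ γ) ^ 2 := sq_le_sq' (abs_le.1 (hF x hx)).1 (abs_le.1 (hF x hx)).2
    calc F x ^ 2 / x ^ c ≤ (K * x ^ γ) ^ 2 / x ^ c :=
          div_le_div_of_nonneg_right hsq (Real.rpow_pos_of_pos hx.1 c).le
      _ = K ^ 2 * x ^ (2 * γ - c) := by
          rw [Real.rpow_sub hx.1, mul_comm 2 γ, Real.rpow_mul hx.1.le, Real.rpow_two]
          ring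

theorem AntitoneOn.le_of_tendsto_nhdsGT {g : ℝ → ℝ} {a b l : ℝ} (hg : AntitoneOn g (Ioc a b))
    (hab : a < b) (hlim : Tendsto g (𝓝[>] a) (𝓝 l)) : g b ≤ l :=
  ge_of_tendsto hlim <| by
    filter_upwards [Ioo_mem_nhdsGT hab] with x hx
    exact hg ⟨hx.1, hx.2.le⟩ ⟨hab, le_rfl⟩ hx.2.le

theorem mul_flux_le_of_stability_nonneg {r F J c : ℝ} (hr : 0 < r)
    (h : 0 ≤ 2 * -(1 / r * F * J) + c * (1 / r * F) ^ 2 / r) :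
    2 * r * F * (r * J) ≤ c * F ^ 2 := by
  have hrepr : 2 * -(1 / r * F * J) + c * (1 / r * F) ^ 2 / r
      = (c * F ^ 2 - 2 * r * F * (r * J)) / r ^ 3 := by
    field_simp
    ring
  rwa [hrepr, le_div_iff₀ (by positivity), zero_mul, sub_nonneg] at h

theorem zpinch_instability_criterion_m_ge_two_vanishing_current_general
    (r₀ : ℝ) (hr₀ : 0 < r₀)
    (m : ℤ)
    (α β C : ℝ) (hα : α = ((m:ℝ) ^ 2 - 2) / 2) (hβ : α < β)
    (Jz : ℝ → ℝ)
    (hJc : ContinuousOn Jz (Icc (0:ℝ) r₀))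
    (hJb : ∀ r ∈ Icc (0:ℝ) r₀, |Jz r| ≤ C * r ^ β)
    (Bθ p' : ℝ → ℝ)
    (hBθ : ∀ r ∈ Ioc (0:ℝ) r₀, Bθ r = (1 / r) * ∫ s in (0:ℝ)..r, s * Jz s)
    (hp' : ∀ r ∈ Ioc (0:ℝ) r₀, p' r = -(Bθ r * Jz r))
    (hBne : ∀ r ∈ Ioc (0:ℝ) r₀, Bθ r ≠ 0) :
    ∃ r ∈ Ioo (0:ℝ) r₀, 2 * p' r + (m:ℝ) ^ 2 * (Bθ r) ^ 2 / r < 0 := by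
  by_contra! hstable
  set F : ℝ → ℝ := fun r => ∫ s in (0:ℝ)..r, s * Jz s
  have hβ_gt : (m:ℝ) ^ 2 - 2 < 2 * β := by rw [hα] at hβ; linarith
  have hflux_cont : ContinuousOn (fun s => s * Jz s) (Icc 0 r₀) := continuousOn_id.mul hJc
  have hF_cont : ContinuousOn F (Icc 0 r₀) := by
    simpa only [uIcc_of_le hr₀.le] using
      continuousOn_primitive_interval' (hflux_cont.intervalIntegrable_of_Icc hr₀.le) left_mem_uIcc
  have hanti : AntitoneOn (fun r => F r ^ 2 / r ^ ((m:ℝ) ^ 2)) (Ioc 0 r₀) := by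
    refine antitoneOn_sq_div_rpow (hF_cont.mono Ioc_subset_Icc_self)
      (fun r hr => hasDerivAt_integral_of_continuousOn hflux_cont hr) (fun r hr => ?_)
    have hcrit := hstable r hr
    rw [hp' r (Ioo_subset_Ioc_self hr), hBθ r (Ioo_subset_Ioc_self hr)] at hcrit
    exact mul_flux_le_of_stability_nonneg hr.1 hcrit
  have hF_bound : ∀ r ∈ Ioo 0 r₀, |F r| ≤ C / (β + 2) * r ^ (β + 2) := fun r hr =>
    abs_integral_mul_le_of_abs_le_rpow (by nlinarith [sq_nonneg (m:ℝ)]) hr.1.le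
      fun s hs => hJb s ⟨hs.1.le, hs.2.trans hr.2.le⟩
  have hle := hanti.le_of_tendsto_nhdsGT hr₀
    (tendsto_sq_div_rpow_nhdsGT_zero hr₀ (by linarith) hF_bound)
  have hF₀ : F r₀ ≠ 0 := by
    have := hBne r₀ ⟨hr₀, le_rfl⟩
    rw [hBθ r₀ ⟨hr₀, le_rfl⟩] at this
    exact right_ne_zero_of_mul this
  exact hle.not_gt (by positivity)

/-- Lemma 2.6, instability criterion for `|m| ≥ 2` when the axial current
vanishes at the axis to order `β > α = (m²-2)/2`. If also `B_θ ≠ 0` on `(0,r₀]`, then there is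
`r* ∈ (0,r₀)` with `2 p'(r*) + m² B_θ(r*)²/r* < 0`. -/
theorem zpinch_instability_criterion_m_ge_two_vanishing_current
    (r₀ : ℝ) (hr₀ : 0 < r₀)
    (m : ℤ) (hm : 2 ≤ |m|)
    (α β C : ℝ) (hα : α = ((m:ℝ) ^ 2 - 2) / 2) (hβ : α < β) (hC : 0 < C)
    (Jz : ℝ → ℝ)
    (hJc : ContinuousOn Jz (Icc (0:ℝ) r₀))
    (hJb : ∀ r ∈ Icc (0:ℝ) r₀, |Jz r| ≤ C * r ^ β)
    (Bθ p' : ℝ → ℝ)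
    (hBθ : ∀ r ∈ Ioc (0:ℝ) r₀, Bθ r = (1 / r) * ∫ s in (0:ℝ)..r, s * Jz s)
    (hp' : ∀ r ∈ Ioc (0:ℝ) r₀, p' r = -(Bθ r * Jz r))
    (hBne : ∀ r ∈ Ioc (0:ℝ) r₀, Bθ r ≠ 0) :
    ∃ r ∈ Ioo (0:ℝ) r₀, 2 * p' r + (m:ℝ) ^ 2 * (Bθ r) ^ 2 / r < 0 :=
  zpinch_instability_criterion_m_ge_two_vanishing_current_general r₀ hr₀ m α β C hα hβ Jz hJc hJb Bθ
    p' hBθ hp' hBne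
end

section
/- Let r₀ > 0 and let J_z : [0,r₀] → [0,∞) be continuous, not identically zero, and compactly supported in the open interval (0,r₀). Define B_θ(r) = (1/r) ∫₀^r s J_z(s) ds for r ∈ (0,r₀] and p'(r) = −B_θ(r) J_z(r). Then for every integer m ≠ 0 there exists r* ∈ (0,r₀) such that 2 p'(r*) + m² B_θ(r*)² / r* < 0. -/
/-!
Write `I r = ∫₀^r s J_z(s) ds`, so that `B_θ = I / r`, `p' = -I J_z / r` and `I' = r J_z`.
Multiplied by `r³`, the criterion at `r` becomes `m² I² < 2 r I I'`, which says exactly that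
`I² r^(-m²)` has positive derivative at `r`. Because `J_z` vanishes below `a`, `I a = 0`; at a
point `r₁` with `J_z r₁ ≠ 0` we have `I' r₁ ≠ 0`, so `I c ≠ 0` for some `c ∈ (r₁, r₀)`. The mean
value theorem for `I² r^(-m²)` on `[a, c]` then gives the point `r*`.
-/

open Set MeasureTheory

theorem exists_mul_sq_lt_two_mul_mul_deriv {f f' : ℝ → ℝ} {a c : ℝ} (k : ℝ) (ha : 0 < a)
    (hac : a < c) (hf : ContinuousOn f (Icc a c)) (hf' : ∀ r ∈ Ioo a c, HasDerivAt f (f' r) r)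
    (hfa : f a = 0) (hfc : f c ≠ 0) :
    ∃ r ∈ Ioo a c, k * f r ^ 2 < 2 * r * f r * f' r := by
  have hpos : ∀ r ∈ Icc a c, 0 < r := fun r hr => ha.trans_le hr.1
  have hFc : ContinuousOn (fun r => f r ^ 2 * r ^ (-k)) (Icc a c) :=
    (hf.pow 2).mul (continuousOn_id.rpow_const fun r hr => Or.inl (hpos r hr).ne')
  have hFd : ∀ r ∈ Ioo a c, HasDerivAt (fun r => f r ^ 2 * r ^ (-k))
      (r ^ (-k - 1) * (2 * r * f r * f' r - k * f r ^ 2)) r := by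
    intro r hr
    have hr0 := hpos r (Ioo_subset_Icc_self hr)
    refine (((hf' r hr).pow 2).mul
      (Real.hasDerivAt_rpow_const (p := -k) (Or.inl hr0.ne'))).congr_deriv ?_
    rw [Real.rpow_sub_one hr0.ne', Pi.pow_apply]
    field_simp
    ring
  obtain ⟨r, hr, hslope⟩ := exists_hasDerivAt_eq_slope _ _ hac hFc hFd
  have hslope_pos : 0 < r ^ (-k - 1) * (2 * r * f r * f' r - k * f r ^ 2) := by
    rw [hslope, hfa]
    have hFc_pos : 0 < f c ^ 2 * c ^ (-k) :=
      mul_pos (pow_two_pos_of_ne_zero hfc) (Real.rpow_pos_of_pos (hpos c ⟨hac.le, le_rfl⟩) _)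
    simpa using div_pos hFc_pos (sub_pos.2 hac)
  refine ⟨r, hr, sub_pos.1 (pos_of_mul_pos_right hslope_pos ?_)⟩
  exact (Real.rpow_pos_of_pos (hpos r (Ioo_subset_Icc_self hr)) _).le

theorem zpinch_instability_criterion_compact_support_general
    (r₀ : ℝ)
    (Jz : ℝ → ℝ)
    (hJc : ContinuousOn Jz (Icc (0:ℝ) r₀))
    (hJne : ∃ r ∈ Icc (0:ℝ) r₀, Jz r ≠ 0)
    (a b : ℝ) (ha : 0 < a) (hb : b < r₀)
    (hsupp : ∀ r : ℝ, Jz r ≠ 0 → r ∈ Icc a b)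
    (Bθ p' : ℝ → ℝ)
    (hBθ : ∀ r ∈ Ioc (0:ℝ) r₀, Bθ r = (1 / r) * ∫ s in (0:ℝ)..r, s * Jz s)
    (hp' : ∀ r ∈ Ioc (0:ℝ) r₀, p' r = -(Bθ r * Jz r)) :
    ∀ m : ℤ, m ≠ 0 →
      ∃ r ∈ Ioo (0:ℝ) r₀, 2 * p' r + (m:ℝ) ^ 2 * (Bθ r) ^ 2 / r < 0 := by
  intro m _
  set I : ℝ → ℝ := fun r => ∫ s in (0:ℝ)..r, s * Jz s
  have hJ : Continuous Jz := (hJc.mono Ioo_subset_Icc_self).continuous_of_tsupport_subset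
    isOpen_Ioo ((closure_minimal hsupp isClosed_Icc).trans (Icc_subset_Ioo ha hb))
  have hI : ∀ r, HasDerivAt I (r * Jz r) r := fun r =>
    ((continuous_id.mul hJ).integral_hasStrictDerivAt 0 r).hasDerivAt
  have hIa : I a = 0 := by
    change ∫ s in (0:ℝ)..a, s * Jz s = 0
    rw [intervalIntegral.integral_of_le ha.le, integral_Ioc_eq_integral_Ioo]
    refine setIntegral_eq_zero_of_forall_eq_zero fun s hs => ?_
    rw [show Jz s = 0 from not_imp_comm.1 (hsupp s) fun h => h.1.not_gt hs.2, mul_zero]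
  obtain ⟨r₁, -, hr₁⟩ := hJne
  have hr₁ab := hsupp r₁ hr₁
  obtain ⟨c, hc, hIc⟩ : ∃ c ∈ Ioo r₁ r₀, I c ≠ 0 :=
    (Filter.Eventually.and (Ioo_mem_nhdsGT (hr₁ab.2.trans_lt hb))
      (((hI r₁).eventually_ne (mul_ne_zero (ha.trans_le hr₁ab.1).ne' hr₁)).filter_mono
        (nhdsGT_le_nhdsNE r₁))).exists
  obtain ⟨r, hr, hkey⟩ := exists_mul_sq_lt_two_mul_mul_deriv ((m : ℝ) ^ 2) ha
    (hr₁ab.1.trans_lt hc.1) (fun x _ => (hI x).continuousAt.continuousWithinAt)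
    (fun x _ => hI x) hIa hIc
  have hr_mem : r ∈ Ioo 0 r₀ := ⟨ha.trans hr.1, hr.2.trans hc.2⟩
  refine ⟨r, hr_mem, ?_⟩
  rw [hp' r (Ioo_subset_Ioc_self hr_mem), hBθ r (Ioo_subset_Ioc_self hr_mem)]
  have hcriterion : 2 * -((1 / r) * I r * Jz r) + (m : ℝ) ^ 2 * ((1 / r) * I r) ^ 2 / r
      = ((m : ℝ) ^ 2 * I r ^ 2 - 2 * r * I r * (r * Jz r)) / r ^ 3 := by
    field_simp; ring
  rw [hcriterion]
  exact div_neg_of_neg_of_pos (sub_neg.2 hkey) (pow_pos hr_mem.1 3)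

/-- Corollary 2.7. If the axial current `J_z ≥ 0` is continuous, not
identically zero, and compactly supported in `(0,r₀)`, then for every integer `m ≠ 0` the
instability criterion `2 p'(r*) + m² B_θ(r*)²/r* < 0` holds for some `r* ∈ (0,r₀)`. -/
theorem zpinch_instability_criterion_compact_support
    (r₀ : ℝ) (hr₀ : 0 < r₀)
    (Jz : ℝ → ℝ)
    (hJc : ContinuousOn Jz (Icc (0:ℝ) r₀))
    (hJnn : ∀ r ∈ Icc (0:ℝ) r₀, 0 ≤ Jz r)
    (hJne : ∃ r ∈ Icc (0:ℝ) r₀, Jz r ≠ 0)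
    (a b : ℝ) (ha : 0 < a) (hab : a ≤ b) (hb : b < r₀)
    (hsupp : ∀ r : ℝ, Jz r ≠ 0 → r ∈ Icc a b)
    (Bθ p' : ℝ → ℝ)
    (hBθ : ∀ r ∈ Ioc (0:ℝ) r₀, Bθ r = (1 / r) * ∫ s in (0:ℝ)..r, s * Jz s)
    (hp' : ∀ r ∈ Ioc (0:ℝ) r₀, p' r = -(Bθ r * Jz r)) :
    ∀ m : ℤ, m ≠ 0 →
      ∃ r ∈ Ioo (0:ℝ) r₀, 2 * p' r + (m:ℝ) ^ 2 * (Bθ r) ^ 2 / r < 0 :=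
  zpinch_instability_criterion_compact_support_general r₀ Jz hJc hJne a b ha hb hsupp Bθ p' hBθ hp'
end

section
/- Let 0 < s₁ < r₀ and let p ∈ C¹([s₁,r₀]) satisfy p(r) > 0 and p'(r) < 0 for r ∈ [s₁,r₀), and p(r₀) = 0. Set g(s₁) = sup_{s₁ ≤ s < r₀} p(s)/(−p'(s)) and assume g(s₁) < ∞. Then for every continuously differentiable function ξ : [s₁,r₀] → ℝ: ∫_{s₁}^{r₀} (−p'(r)) ξ(r)² dr ≤ 2 p(s₁) ξ(s₁)² + 4 g(s₁) ∫_{s₁}^{r₀} p(r) ξ'(r)² dr. -/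
open Set MeasureTheory

/-- Lemma 3.6, weighted boundary estimate. With `p ∈ C¹([s₁,r₀])`, `p > 0`,
`p' < 0` on `[s₁,r₀)`, `p(r₀) = 0` and `g(s₁) = sup_{[s₁,r₀)} p/(-p') < ∞`, every `C¹` function
`ξ` satisfies `∫_{s₁}^{r₀} (-p') ξ² ≤ 2 p(s₁) ξ(s₁)² + 4 g(s₁) ∫_{s₁}^{r₀} p ξ'²`. -/
theorem zpinch_weighted_boundary_estimate
    (r₀ s₁ : ℝ) (hs₁ : 0 < s₁) (hs₁r₀ : s₁ < r₀)
    (p p' : ℝ → ℝ)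
    (hp : ∀ r ∈ Icc s₁ r₀, HasDerivWithinAt p (p' r) (Icc s₁ r₀) r)
    (hp'c : ContinuousOn p' (Icc s₁ r₀))
    (hppos : ∀ r ∈ Ico s₁ r₀, 0 < p r)
    (hp'neg : ∀ r ∈ Ico s₁ r₀, p' r < 0)
    (hpr₀ : p r₀ = 0)
    (hbdd : BddAbove ((fun s => p s / (-p' s)) '' Ico s₁ r₀)) :
    ∀ ξ ξ' : ℝ → ℝ,
      (∀ r ∈ Icc s₁ r₀, HasDerivWithinAt ξ (ξ' r) (Icc s₁ r₀) r) →
      ContinuousOn ξ' (Icc s₁ r₀) →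
      (∫ r in s₁..r₀, (-p' r) * (ξ r) ^ 2) ≤
        2 * p s₁ * (ξ s₁) ^ 2 +
          4 * sSup ((fun s => p s / (-p' s)) '' Ico s₁ r₀) *
            ∫ r in s₁..r₀, p r * (ξ' r) ^ 2 := by
  intro ξ ξ' hξ hξ'c
  set g := sSup ((fun s => p s / (-p' s)) '' Ico s₁ r₀) with hgdef
  have hle : s₁ ≤ r₀ := hs₁r₀.le
  have hmem_s₁ : s₁ ∈ Ico s₁ r₀ := ⟨le_refl _, hs₁r₀⟩
  have hpc : ContinuousOn p (Icc s₁ r₀) := fun r hr => (hp r hr).continuousWithinAt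
  have hξc : ContinuousOn ξ (Icc s₁ r₀) := fun r hr => (hξ r hr).continuousWithinAt
  -- p' r₀ ≤ 0
  have hp'r₀ : p' r₀ ≤ 0 := by
    have hne : (nhdsWithin r₀ (Ico s₁ r₀)).NeBot := by
      rw [← mem_closure_iff_nhdsWithin_neBot, closure_Ico hs₁r₀.ne]
      exact ⟨hle, le_refl _⟩
    have ht : Filter.Tendsto p' (nhdsWithin r₀ (Ico s₁ r₀)) (nhds (p' r₀)) :=
      ((hp'c r₀ (right_mem_Icc.2 hle)).mono Ico_subset_Icc_self).tendsto
    exact le_of_tendsto ht (Filter.eventually_of_mem self_mem_nhdsWithin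
      fun x hx => (hp'neg x hx).le)
  have hgle : ∀ r ∈ Ico s₁ r₀, p r ≤ g * (-p' r) := by
    intro r hr
    have hq : 0 < -p' r := neg_pos.2 (hp'neg r hr)
    have h1 : p r / (-p' r) ≤ g := le_csSup hbdd (mem_image_of_mem _ hr)
    calc p r = (p r / (-p' r)) * (-p' r) := (div_mul_cancel₀ _ hq.ne').symm
    _ ≤ g * (-p' r) := mul_le_mul_of_nonneg_right h1 hq.le
  have hg0 : 0 ≤ g := by
    have hq : 0 < -p' s₁ := neg_pos.2 (hp'neg s₁ hmem_s₁)
    have h1 : (0:ℝ) ≤ p s₁ / (-p' s₁) := div_nonneg (hppos s₁ hmem_s₁).le hq.le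
    exact h1.trans (le_csSup hbdd (mem_image_of_mem _ hmem_s₁))
  -- pointwise Young inequality
  have hpt : ∀ r ∈ Icc s₁ r₀,
      2 * (p r * (ξ r * ξ' r)) ≤ (-p' r) * ξ r ^ 2 / 2 + 2 * g * (p r * ξ' r ^ 2) := by
    intro r hr
    rcases eq_or_lt_of_le hr.2 with h | h
    · rw [h, hpr₀]
      have := sq_nonneg (ξ r₀)
      nlinarith [hp'r₀, sq_nonneg (ξ r₀)]
    · have hr' : r ∈ Ico s₁ r₀ := ⟨hr.1, h⟩
      have hq : 0 < -p' r := neg_pos.2 (hp'neg r hr')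
      have hpq := hgle r hr'
      have hp0 := (hppos r hr').le
      have hkey : p r * p r ≤ g * (-p' r) * p r := mul_le_mul_of_nonneg_right hpq hp0
      nlinarith [sq_nonneg ((-p' r) * ξ r - 2 * p r * ξ' r),
        mul_le_mul_of_nonneg_right hkey (sq_nonneg (ξ' r)), hq, sq_nonneg (ξ' r)]
  -- derivative of F = -(p ξ²)
  have hF : ∀ r ∈ Icc s₁ r₀, HasDerivWithinAt (fun r => -(p r * ξ r ^ 2))
      (-(p' r * ξ r ^ 2 + p r * (2 * ξ r ^ 1 * ξ' r))) (Icc s₁ r₀) r :=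
    fun r hr => (((hp r hr).mul ((hξ r hr).pow 2))).neg
  have hFc : ContinuousOn (fun r => -(p r * ξ r ^ 2)) (Icc s₁ r₀) :=
    fun r hr => (hF r hr).continuousWithinAt
  have hAc : ContinuousOn (fun r => -(p' r * ξ r ^ 2 + p r * (2 * ξ r ^ 1 * ξ' r)))
      (Icc s₁ r₀) :=
    ((hp'c.mul (hξc.pow 2)).add (hpc.mul (((continuousOn_const.mul (hξc.pow 1)).mul hξ'c)))).neg
  have hBc : ContinuousOn (fun r => 2 * (p r * (ξ r * ξ' r))) (Icc s₁ r₀) :=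
    continuousOn_const.mul (hpc.mul (hξc.mul hξ'c))
  have hIc : ContinuousOn (fun r => (-p' r) * ξ r ^ 2) (Icc s₁ r₀) :=
    hp'c.neg.mul (hξc.pow 2)
  have hJc : ContinuousOn (fun r => p r * ξ' r ^ 2) (Icc s₁ r₀) :=
    hpc.mul (hξ'c.pow 2)
  have huIcc : uIcc s₁ r₀ = Icc s₁ r₀ := uIcc_of_le hle
  have hAi : IntervalIntegrable (fun r => -(p' r * ξ r ^ 2 + p r * (2 * ξ r ^ 1 * ξ' r)))
      volume s₁ r₀ := (hAc.mono huIcc.subset).intervalIntegrable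
  have hBi : IntervalIntegrable (fun r => 2 * (p r * (ξ r * ξ' r))) volume s₁ r₀ :=
    (hBc.mono huIcc.subset).intervalIntegrable
  have hIi : IntervalIntegrable (fun r => (-p' r) * ξ r ^ 2) volume s₁ r₀ :=
    (hIc.mono huIcc.subset).intervalIntegrable
  have hJi : IntervalIntegrable (fun r => p r * ξ' r ^ 2) volume s₁ r₀ :=
    (hJc.mono huIcc.subset).intervalIntegrable
  -- integration by parts
  have hIBP : (∫ r in s₁..r₀, -(p' r * ξ r ^ 2 + p r * (2 * ξ r ^ 1 * ξ' r)))
      = p s₁ * ξ s₁ ^ 2 := by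
    rw [intervalIntegral.integral_eq_sub_of_hasDeriv_right_of_le hle hFc
      (fun x hx => ((hF x (Ioo_subset_Icc_self hx)).hasDerivAt
        (Icc_mem_nhds hx.1 hx.2)).hasDerivWithinAt) hAi]
    simp [hpr₀]
  -- split
  have hsplit : (∫ r in s₁..r₀, (-p' r) * ξ r ^ 2)
      = p s₁ * ξ s₁ ^ 2 + ∫ r in s₁..r₀, 2 * (p r * (ξ r * ξ' r)) := by
    rw [← hIBP, ← intervalIntegral.integral_add hAi hBi]
    congr 1
    funext r
    ring
  -- bound the middle term
  have hmid : (∫ r in s₁..r₀, 2 * (p r * (ξ r * ξ' r)))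
      ≤ (∫ r in s₁..r₀, (-p' r) * ξ r ^ 2) / 2
        + 2 * g * ∫ r in s₁..r₀, p r * ξ' r ^ 2 := by
    have h1 : (∫ r in s₁..r₀, 2 * (p r * (ξ r * ξ' r)))
        ≤ ∫ r in s₁..r₀, ((-p' r) * ξ r ^ 2 / 2 + 2 * g * (p r * ξ' r ^ 2)) := by
      apply intervalIntegral.integral_mono_on hle hBi
      · exact ((hIc.div_const 2 |>.add ((continuousOn_const.mul hJc))).mono
          huIcc.subset).intervalIntegrable
      · exact hpt
    calc (∫ r in s₁..r₀, 2 * (p r * (ξ r * ξ' r)))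
        ≤ ∫ r in s₁..r₀, ((-p' r) * ξ r ^ 2 / 2 + 2 * g * (p r * ξ' r ^ 2)) := h1
      _ = (∫ r in s₁..r₀, (-p' r) * ξ r ^ 2) / 2
            + 2 * g * ∫ r in s₁..r₀, p r * ξ' r ^ 2 := by
          rw [intervalIntegral.integral_add ((hIi.div_const 2))
            (hJi.const_mul (2 * g))]
          rw [intervalIntegral.integral_div, intervalIntegral.integral_const_mul]
  linarith [hsplit, hmid]
end

section
/- Fix r₀ > 0, γ > 1, A > 0 and a real number k. Let J_z : [0,r₀] → ℝ be continuous, define B_θ(r) = (1/r) ∫₀^r s J_z(s) ds for r ∈ (0,r₀] (B_θ(0)=0) and p'(r) = −B_θ(r) J_z(r), assume p is admissible (p ∈ C¹([0,r₀]), p > 0 on [0,r₀), p(r₀) = 0, p' < 0 on some interval [r₀−ε, r₀), lim_{r→r₀⁻} p(r)/p'(r) = 0), and set ρ = (p/A)^{1/γ}. Then there exists a constant C > 0 such that for all C¹ functions ξ, η on [0,r₀] with ξ(0) = 0 and J(ξ,η) = 2π² ∫₀^{r₀} ρ(r)(ξ(r)² + η(r)²) r dr = 1, one has E_{0,k}(ξ,η)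 ≥ −C, where E_{0,k}(ξ,η) = 2π² ∫₀^{r₀} { 2p'(r)ξ(r)²/r + B_θ(r)² [ kη(r) − (1/r)((rξ)'(r) − 2ξ(r)) ]² + γ p(r) [ (1/r)(rξ)'(r) − kη(r) ]² } r dr. -/
open Set MeasureTheory

/-!
Integrating by parts against `p(r₀) = 0` and `ξ(0) = 0` turns `∫ 2 p' ξ²` into `-∫ 4 p ξ ξ'`.
After the nonnegative `Bθ²` term is dropped, what remains of the integrand is `p` times a
quadratic form in `(ξ, r ξ', r η)` whose `(ξ, r ξ')` block is positive definite because `γ > 1`;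
completing squares bounds it below by `-k² p η² r / (1 - 1/γ)`. Since `p` is bounded on
`[0, r₀]`, `p = A (p/A)^(1 - 1/γ) (p/A)^(1/γ) ≤ M ρ`, so the energy is at least
`-(k² M / (1 - 1/γ)) ∫ ρ (ξ² + η²) r`, which the normalisation `J = 1` makes a constant.
-/

theorem continuousOn_one_div_mul_of_hasDerivWithinAt_zero {s : Set ℝ} {f : ℝ → ℝ}
    (hf : ContinuousOn f s) (hf0 : f 0 = 0) (hd : HasDerivWithinAt f 0 s 0) :
    ContinuousOn (fun r => 1 / r * f r) s := by
  intro x hx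
  rcases eq_or_ne x 0 with rfl | hx0
  · rw [← continuousWithinAt_sdiff_self]
    simpa [ContinuousWithinAt, slope_fun_def_field, hf0, div_eq_inv_mul] using
      hasDerivWithinAt_iff_tendsto_slope.1 hd
  · exact (continuousWithinAt_const.div continuousWithinAt_id hx0).mul (hf x hx)

theorem continuousOn_one_div_mul_integral_mul {J : ℝ → ℝ} {a : ℝ} (ha : 0 ≤ a)
    (hJ : ContinuousOn J (Icc 0 a)) :
    ContinuousOn (fun r => 1 / r * ∫ s in (0:ℝ)..r, s * J s) (Icc 0 a) := by
  have hsJ : ContinuousOn (fun s => s * J s) (Icc 0 a) := continuousOn_id.mul hJ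
  have h0 : Fact ((0:ℝ) ∈ Icc 0 a) := ⟨left_mem_Icc.2 ha⟩
  refine continuousOn_one_div_mul_of_hasDerivWithinAt_zero ?_ (by simp) ?_
  · simpa [uIcc_of_le ha] using
      intervalIntegral.continuousOn_primitive_interval (μ := volume) (a := 0) (b := a)
        (by simpa [uIcc_of_le ha] using hsJ.integrableOn_Icc)
  · simpa using intervalIntegral.integral_hasDerivWithinAt_right (a := 0) (b := 0)
      (s := Icc 0 a) (t := Icc 0 a) (by simp)
      (hsJ.stronglyMeasurableAtFilter_nhdsWithin measurableSet_Icc 0) (hsJ 0 h0.out)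

theorem le_rpow_one_sub_one_div_mul_rpow_one_div {y Y γ : ℝ} (hy : 0 ≤ y) (hyY : y ≤ Y)
    (hγ : 1 ≤ γ) :
    y ≤ Y ^ (1 - 1 / γ) * y ^ (1 / γ) := by
  have hexp : 0 ≤ 1 - 1 / γ := sub_nonneg.2 ((div_le_one (by linarith)).2 hγ)
  calc y = y ^ (1 - 1 / γ) * y ^ (1 / γ) := by
        rw [← Real.rpow_add' hy (by norm_num), sub_add_cancel, Real.rpow_one]
    _ ≤ Y ^ (1 - 1 / γ) * y ^ (1 / γ) := by gcongr

theorem IsCompact.exists_le_mul_div_rpow_one_div {α : Type*} [TopologicalSpace α] {s : Set α}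
    {p : α → ℝ} (hs : IsCompact s) (hp : ContinuousOn p s) (hp0 : ∀ r ∈ s, 0 ≤ p r) {A γ : ℝ}
    (hA : 0 < A) (hγ : 1 ≤ γ) : ∃ M ≥ 0, ∀ r ∈ s, p r ≤ M * (p r / A) ^ (1 / γ) := by
  obtain ⟨P, hP⟩ := hs.exists_bound_of_continuousOn hp
  refine ⟨A * (max P 0 / A) ^ (1 - 1 / γ), by positivity, fun r hr => ?_⟩
  have hpr : p r / A ≤ max P 0 / A := by
    gcongr
    exact (le_abs_self _).trans ((hP r hr).trans (le_max_left _ _))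
  calc p r = A * (p r / A) := by field_simp
    _ ≤ A * ((max P 0 / A) ^ (1 - 1 / γ) * (p r / A) ^ (1 / γ)) := by
        gcongr
        exact le_rpow_one_sub_one_div_mul_rpow_one_div (div_nonneg (hp0 r hr) hA.le) hpr hγ
    _ = _ := by ring

theorem neg_mul_sq_le_sausage_quadratic {γ k r x x' n : ℝ} (hγ : 1 < γ) (hr : 0 < r) :
    -(k ^ 2 / (1 - 1 / γ)) * n ^ 2 * r ≤ γ * ((x + r * x') / r - k * n) ^ 2 * r - 4 * x * x' := by
  have hγ0 : 0 < γ := by linarith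
  set β := 1 - 1 / γ with hβ
  have hβ0 : 0 < β := sub_pos.2 ((div_lt_one hγ0).2 hγ)
  have key : γ * ((x + r * x') / r - k * n) ^ 2 * r - 4 * x * x' + k ^ 2 / β * n ^ 2 * r
      = (γ * (x + r * x' - k * r * n - 2 * x / γ) ^ 2 + (2 * β * x - k * r * n) ^ 2 / β) / r := by
    have hγ1 : γ - 1 ≠ 0 := by linarith
    rw [hβ]
    field_simp
    ring
  have hsq : 0 ≤ (γ * (x + r * x' - k * r * n - 2 * x / γ) ^ 2
      + (2 * β * x - k * r * n) ^ 2 / β) / r := by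
    positivity
  linarith

theorem le_sausage_energy_integrand {γ k M r P ρ d B x x' n : ℝ} (hγ : 1 < γ) (hr : 0 < r)
    (hP : 0 ≤ P) (hPM : P ≤ M * ρ) :
    2 * (d * x ^ 2 + P * (2 * x * x')) - k ^ 2 * M / (1 - 1 / γ) * (ρ * (x ^ 2 + n ^ 2) * r) ≤
      (2 * d * x ^ 2 / r + B ^ 2 * (k * n - (r * x' - x) / r) ^ 2
        + γ * P * ((x + r * x') / r - k * n) ^ 2) * r := by
  have hc : 0 ≤ k ^ 2 / (1 - 1 / γ) :=
    div_nonneg (sq_nonneg k) (sub_nonneg.2 ((div_le_one (by linarith)).2 hγ.le))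
  have hquad := mul_le_mul_of_nonneg_left
    (neg_mul_sq_le_sausage_quadratic (x := x) (x' := x') (n := n) (k := k) hγ hr) hP
  have hPρ : k ^ 2 / (1 - 1 / γ) * (n ^ 2 * r) * P ≤
      k ^ 2 / (1 - 1 / γ) * (n ^ 2 * r) * (M * ρ) := by
    gcongr
  have hx : 0 ≤ k ^ 2 / (1 - 1 / γ) * (M * ρ) * (x ^ 2 * r) := by
    have := hP.trans hPM
    positivity
  have hB : 0 ≤ B ^ 2 * (k * n - (r * x' - x) / r) ^ 2 * r := by positivity
  have hd : 2 * d * x ^ 2 / r * r = 2 * d * x ^ 2 := div_mul_cancel₀ _ hr.ne'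
  linear_combination hquad + hPρ + hx + hB - hd

theorem integral_deriv_mul_sq_eq_zero {a b : ℝ} (hab : a ≤ b) {u u' v v' : ℝ → ℝ}
    (hu : ∀ x ∈ Icc a b, HasDerivWithinAt u (u' x) (Icc a b) x)
    (hv : ∀ x ∈ Icc a b, HasDerivWithinAt v (v' x) (Icc a b) x)
    (hu' : ContinuousOn u' (Icc a b)) (hv' : ContinuousOn v' (Icc a b))
    (hub : u b = 0) (hva : v a = 0) :
    ∫ x in a..b, u' x * v x ^ 2 + u x * (2 * v x * v' x) = 0 := by
  have hvc : ContinuousOn v (Icc a b) := fun x hx => (hv x hx).continuousWithinAt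
  have hderiv : ∀ {f f' : ℝ → ℝ}, (∀ x ∈ Icc a b, HasDerivWithinAt f (f' x) (Icc a b) x) →
      ∀ x ∈ Ioo (min a b) (max a b), HasDerivAt f (f' x) x := by
    intro f f' hf x hx
    rw [min_eq_left hab, max_eq_right hab] at hx
    exact (hf x (Ioo_subset_Icc_self hx)).hasDerivAt (Icc_mem_nhds hx.1 hx.2)
  have h := intervalIntegral.integral_deriv_mul_eq_sub_of_hasDeriv_right
    (u := u) (v := fun x => v x ^ 2) (v' := fun x => 2 * v x * v' x)
    (uIcc_of_le hab ▸ fun x hx => (hu x hx).continuousWithinAt)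
    (uIcc_of_le hab ▸ hvc.pow 2)
    (fun x hx => (hderiv hu x hx).hasDerivWithinAt)
    (fun x hx => by simpa [mul_comm] using ((hderiv hv x hx).fun_pow 2).hasDerivWithinAt)
    (hu'.intervalIntegrable_of_Icc hab)
    (((continuousOn_const.mul hvc).mul hv').intervalIntegrable_of_Icc hab)
  simpa [hub, hva] using h

theorem neg_mul_integral_le_sausage_energy {r₀ γ k M : ℝ} (hr₀ : 0 ≤ r₀) (hγ : 1 < γ)
    (hM : 0 ≤ M) {Bθ p p' ρ ξ ξ' η : ℝ → ℝ}
    (hp : ∀ r ∈ Icc 0 r₀, HasDerivWithinAt p (p' r) (Icc 0 r₀) r)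
    (hp'c : ContinuousOn p' (Icc 0 r₀)) (hp0 : ∀ r ∈ Icc 0 r₀, 0 ≤ p r) (hpr₀ : p r₀ = 0)
    (hρc : ContinuousOn ρ (Icc 0 r₀)) (hρ0 : ∀ r ∈ Icc 0 r₀, 0 ≤ ρ r)
    (hpM : ∀ r ∈ Icc 0 r₀, p r ≤ M * ρ r)
    (hξ : ∀ r ∈ Icc 0 r₀, HasDerivWithinAt ξ (ξ' r) (Icc 0 r₀) r)
    (hξ'c : ContinuousOn ξ' (Icc 0 r₀)) (hξ0 : ξ 0 = 0) (hηc : ContinuousOn η (Icc 0 r₀)) :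
    -(k ^ 2 * M / (1 - 1 / γ)) * ∫ r in (0:ℝ)..r₀, ρ r * (ξ r ^ 2 + η r ^ 2) * r ≤
      ∫ r in (0:ℝ)..r₀, (2 * p' r * ξ r ^ 2 / r
        + Bθ r ^ 2 * (k * η r - (r * ξ' r - ξ r) / r) ^ 2
        + γ * p r * ((ξ r + r * ξ' r) / r - k * η r) ^ 2) * r := by
  set c := k ^ 2 * M / (1 - 1 / γ)
  have hpc : ContinuousOn p (Icc 0 r₀) := fun r hr => (hp r hr).continuousWithinAt
  have hξc : ContinuousOn ξ (Icc 0 r₀) := fun r hr => (hξ r hr).continuousWithinAt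
  have hdiv : IntervalIntegrable (fun r => p' r * ξ r ^ 2 + p r * (2 * ξ r * ξ' r)) volume 0 r₀ :=
    ContinuousOn.intervalIntegrable_of_Icc hr₀ (by fun_prop)
  have hmass : IntervalIntegrable (fun r => ρ r * (ξ r ^ 2 + η r ^ 2) * r) volume 0 r₀ :=
    ContinuousOn.intervalIntegrable_of_Icc hr₀ (by fun_prop)
  by_cases hE : IntervalIntegrable (fun r => (2 * p' r * ξ r ^ 2 / r
      + Bθ r ^ 2 * (k * η r - (r * ξ' r - ξ r) / r) ^ 2
      + γ * p r * ((ξ r + r * ξ' r) / r - k * η r) ^ 2) * r) volume 0 r₀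
  · have h := intervalIntegral.integral_mono_on_of_le_Ioo hr₀
      ((hdiv.const_mul 2).sub (hmass.const_mul c)) hE fun r hr =>
      le_sausage_energy_integrand (B := Bθ r) (d := p' r) (n := η r) hγ hr.1
        (hp0 r (Ioo_subset_Icc_self hr)) (hpM r (Ioo_subset_Icc_self hr))
    rwa [intervalIntegral.integral_sub (hdiv.const_mul 2) (hmass.const_mul c),
      intervalIntegral.integral_const_mul, intervalIntegral.integral_const_mul,
      integral_deriv_mul_sq_eq_zero hr₀ hp hξ hp'c hξ'c hpr₀ hξ0, mul_zero, zero_sub,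
      ← neg_mul] at h
  · -- a non-integrable energy has integral `0` by convention
    rw [intervalIntegral.integral_undef hE, neg_mul, neg_nonpos]
    have hc : 0 ≤ c := div_nonneg (by positivity)
      (sub_nonneg.2 ((div_le_one (by linarith)).2 hγ.le))
    exact mul_nonneg hc (intervalIntegral.integral_nonneg hr₀ fun r hr =>
      mul_nonneg (mul_nonneg (hρ0 r hr) (by positivity)) hr.1)

theorem zpinch_sausage_energy_lower_bound_general
    (r₀ γ A k : ℝ) (hr₀ : 0 < r₀) (hγ : 1 < γ) (hA : 0 < A)
    (Jz Bθ p p' ρ : ℝ → ℝ)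
    (hJc : ContinuousOn Jz (Icc (0:ℝ) r₀))
    (hBθ0 : Bθ 0 = 0)
    (hBθ : ∀ r ∈ Ioc (0:ℝ) r₀, Bθ r = (1 / r) * ∫ s in (0:ℝ)..r, s * Jz s)
    (hp'def : ∀ r ∈ Icc (0:ℝ) r₀, p' r = -(Bθ r * Jz r))
    (hp : ∀ r ∈ Icc (0:ℝ) r₀, HasDerivWithinAt p (p' r) (Icc (0:ℝ) r₀) r)
    -- admissibility of `p`
    (hppos : ∀ r ∈ Ico (0:ℝ) r₀, 0 < p r)
    (hpr₀ : p r₀ = 0)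
    (hρ : ∀ r ∈ Icc (0:ℝ) r₀, ρ r = (p r / A) ^ (1 / γ)) :
    ∃ C > 0, ∀ ξ η ξ' η' : ℝ → ℝ,
      (∀ r ∈ Icc (0:ℝ) r₀, HasDerivWithinAt ξ (ξ' r) (Icc (0:ℝ) r₀) r) →
      ContinuousOn ξ' (Icc (0:ℝ) r₀) →
      (∀ r ∈ Icc (0:ℝ) r₀, HasDerivWithinAt η (η' r) (Icc (0:ℝ) r₀) r) →
      ContinuousOn η' (Icc (0:ℝ) r₀) →
      ξ 0 = 0 →
      2 * Real.pi ^ 2 * (∫ r in (0:ℝ)..r₀, ρ r * ((ξ r) ^ 2 + (η r) ^ 2) * r) = 1 →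
      -C ≤ 2 * Real.pi ^ 2 * ∫ r in (0:ℝ)..r₀,
        (2 * p' r * (ξ r) ^ 2 / r
          + (Bθ r) ^ 2 * (k * η r - (r * ξ' r - ξ r) / r) ^ 2
          + γ * p r * ((ξ r + r * ξ' r) / r - k * η r) ^ 2) * r := by
  have hpc : ContinuousOn p (Icc 0 r₀) := fun r hr => (hp r hr).continuousWithinAt
  have hp0 : ∀ r ∈ Icc 0 r₀, 0 ≤ p r := fun r hr =>
    hr.2.eq_or_lt.elim (fun h => h ▸ hpr₀.ge) fun h => (hppos r ⟨hr.1, h⟩).le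
  have hρ0 : ∀ r ∈ Icc 0 r₀, 0 ≤ ρ r := fun r hr =>
    hρ r hr ▸ Real.rpow_nonneg (div_nonneg (hp0 r hr) hA.le) _
  obtain ⟨M, hM, hpM⟩ := isCompact_Icc.exists_le_mul_div_rpow_one_div hpc hp0 hA hγ.le
  replace hpM : ∀ r ∈ Icc 0 r₀, p r ≤ M * ρ r := fun r hr => hρ r hr ▸ hpM r hr
  have hBθc : ContinuousOn Bθ (Icc 0 r₀) :=
    (continuousOn_one_div_mul_integral_mul hr₀.le hJc).congr fun r hr =>
      hr.1.eq_or_lt.elim (fun h => by simp [← h, hBθ0]) fun h => hBθ r ⟨h, hr.2⟩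
  have hρc : ContinuousOn ρ (Icc 0 r₀) :=
    ((hpc.div_const A).rpow_const fun _ _ => Or.inr (by positivity)).congr hρ
  set c := k ^ 2 * M / (1 - 1 / γ)
  refine ⟨|c| + 1, by positivity, fun ξ η ξ' η' hξ hξ'c hη _ hξ0 hJ => ?_⟩
  have hE := neg_mul_integral_le_sausage_energy (k := k) (Bθ := Bθ) hr₀.le hγ hM hp
    ((hBθc.mul hJc).neg.congr hp'def) hp0 hpr₀ hρc hρ0 hpM hξ hξ'c hξ0
    (fun r hr => (hη r hr).continuousWithinAt)
  calc -(|c| + 1) ≤ 2 * Real.pi ^ 2 * (-c * ∫ r in (0:ℝ)..r₀, ρ r * (ξ r ^ 2 + η r ^ 2) * r) := by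
        rw [mul_left_comm, hJ]
        linarith [le_abs_self c]
    _ ≤ _ := by gcongr

/-- Lemma 3.9, lower bound for the sausage-mode energy. For an admissible
z-pinch equilibrium there is `C > 0` such that `E_{0,k}(ξ,η) ≥ -C` for every `C¹` pair
`(ξ,η)` with `ξ(0) = 0` and `J(ξ,η) = 1`. -/
theorem zpinch_sausage_energy_lower_bound
    (r₀ γ A k : ℝ) (hr₀ : 0 < r₀) (hγ : 1 < γ) (hA : 0 < A)
    (Jz Bθ p p' ρ : ℝ → ℝ)
    (hJc : ContinuousOn Jz (Icc (0:ℝ) r₀))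
    (hBθ0 : Bθ 0 = 0)
    (hBθ : ∀ r ∈ Ioc (0:ℝ) r₀, Bθ r = (1 / r) * ∫ s in (0:ℝ)..r, s * Jz s)
    (hp'def : ∀ r ∈ Icc (0:ℝ) r₀, p' r = -(Bθ r * Jz r))
    (hp : ∀ r ∈ Icc (0:ℝ) r₀, HasDerivWithinAt p (p' r) (Icc (0:ℝ) r₀) r)
    -- admissibility of `p`
    (hppos : ∀ r ∈ Ico (0:ℝ) r₀, 0 < p r)
    (hpr₀ : p r₀ = 0)
    (ε : ℝ) (hε : 0 < ε)
    (hp'neg : ∀ r ∈ Ico (r₀ - ε) r₀, p' r < 0)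
    (hlim : Filter.Tendsto (fun r => p r / p' r) (nhdsWithin r₀ (Iio r₀)) (nhds 0))
    (hρ : ∀ r ∈ Icc (0:ℝ) r₀, ρ r = (p r / A) ^ (1 / γ)) :
    ∃ C > 0, ∀ ξ η ξ' η' : ℝ → ℝ,
      (∀ r ∈ Icc (0:ℝ) r₀, HasDerivWithinAt ξ (ξ' r) (Icc (0:ℝ) r₀) r) →
      ContinuousOn ξ' (Icc (0:ℝ) r₀) →
      (∀ r ∈ Icc (0:ℝ) r₀, HasDerivWithinAt η (η' r) (Icc (0:ℝ) r₀) r) →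
      ContinuousOn η' (Icc (0:ℝ) r₀) →
      ξ 0 = 0 →
      2 * Real.pi ^ 2 * (∫ r in (0:ℝ)..r₀, ρ r * ((ξ r) ^ 2 + (η r) ^ 2) * r) = 1 →
      -C ≤ 2 * Real.pi ^ 2 * ∫ r in (0:ℝ)..r₀,
        (2 * p' r * (ξ r) ^ 2 / r
          + (Bθ r) ^ 2 * (k * η r - (r * ξ' r - ξ r) / r) ^ 2
          + γ * p r * ((ξ r + r * ξ' r) / r - k * η r) ^ 2) * r :=
  zpinch_sausage_energy_lower_bound_general r₀ γ A k hr₀ hγ hA Jz Bθ p p' ρ hJc hBθ0 hBθ hp'def hp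
    hppos hpr₀ hρ
end

section
/- Fix r₀ > 0 and an integer m ≠ 0. Let p ∈ C¹([0,r₀]) and let B_θ : [0,r₀] → ℝ be continuous. Suppose there exists r* ∈ (0,r₀) such that 2 p'(r*) + m² B_θ(r*)²/r* < 0. Then there exist ξ ∈ C_c^∞((0,r₀)) and K > 0 such that for every real k with |k| ≥ K: 2π² ∫₀^{r₀} [ m² B_θ(r)² / ( r (m² + k² r²) ) ] ( ξ(r) − r ξ'(r) )² dr + 2π² ∫₀^{r₀} [ 2 p'(r) + m² B_θ(r)²/r ] ξ(r)² dr < 0. -/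
open Set MeasureTheory

private lemma cont_on_mul_aux {r₀ a : ℝ} (ha : 0 < a) {c w : ℝ → ℝ}
    (hc : ∀ x ∈ Ioc (0:ℝ) r₀, ContinuousWithinAt c (Icc (0:ℝ) r₀) x)
    (hw : Continuous w) (hz : ∀ r < a, w r = 0) :
    ContinuousOn (fun r => c r * w r) (Icc (0:ℝ) r₀) := by
  intro x hx
  rcases lt_or_ge x a with hxa | hxa
  · have hev : ∀ᶠ r in nhds x, c r * w r = (0:ℝ) := by
      filter_upwards [Iio_mem_nhds hxa] with r hr
      rw [hz r hr, mul_zero]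
    exact (continuousWithinAt_const (b := (0:ℝ))).congr_of_eventuallyEq
      (hev.filter_mono nhdsWithin_le_nhds) (by rw [hz x hxa, mul_zero])
  · exact (hc x ⟨lt_of_lt_of_le ha hxa, hx.2⟩).mul hw.continuousWithinAt

set_option maxHeartbeats 1000000 in
/-- core of Proposition 3.16. If `2p'(r*) + m² B_θ(r*)²/r* < 0` for some
`r* ∈ (0,r₀)`, then there is a smooth `ξ` compactly supported in `(0,r₀)` and `K > 0` such that
for all `|k| ≥ K` the reduced fluid energy
`2π² ∫ m²B_θ²/(r(m²+k²r²)) (ξ - rξ')² dr + 2π² ∫ (2p' + m²B_θ²/r) ξ² dr` is negative. -/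
theorem zpinch_kink_energy_negative_large_k
    (r₀ : ℝ) (hr₀ : 0 < r₀)
    (m : ℤ) (hm : m ≠ 0)
    (p p' Bθ : ℝ → ℝ)
    (hp : ∀ r ∈ Icc (0:ℝ) r₀, HasDerivWithinAt p (p' r) (Icc (0:ℝ) r₀) r)
    (hp'c : ContinuousOn p' (Icc (0:ℝ) r₀))
    (hBc : ContinuousOn Bθ (Icc (0:ℝ) r₀))
    (hcrit : ∃ rs ∈ Ioo (0:ℝ) r₀, 2 * p' rs + (m:ℝ) ^ 2 * (Bθ rs) ^ 2 / rs < 0) :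
    ∃ ξ : ℝ → ℝ, ContDiff ℝ (⊤:ℕ∞) ξ ∧ tsupport ξ ⊆ Ioo (0:ℝ) r₀ ∧
      ∃ K > (0:ℝ), ∀ k : ℝ, K ≤ |k| →
        2 * Real.pi ^ 2 * (∫ r in (0:ℝ)..r₀,
            (m:ℝ) ^ 2 * (Bθ r) ^ 2 / (r * ((m:ℝ) ^ 2 + k ^ 2 * r ^ 2))
              * (ξ r - r * deriv ξ r) ^ 2)
          + 2 * Real.pi ^ 2 * (∫ r in (0:ℝ)..r₀,
              (2 * p' r + (m:ℝ) ^ 2 * (Bθ r) ^ 2 / r) * (ξ r) ^ 2) < 0 := by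
  obtain ⟨rs, hrs, hneg⟩ := hcrit
  have hrsIcc : rs ∈ Icc (0:ℝ) r₀ := ⟨hrs.1.le, hrs.2.le⟩
  have hIccn : Icc (0:ℝ) r₀ ∈ nhds rs := Icc_mem_nhds hrs.1 hrs.2
  -- continuity of the coefficient g at rs
  have hgc : ContinuousAt (fun r => 2 * p' r + (m:ℝ) ^ 2 * (Bθ r) ^ 2 / r) rs := by
    have h1 : ContinuousAt p' rs := (hp'c.continuousWithinAt hrsIcc).continuousAt hIccn
    have h2 : ContinuousAt Bθ rs := (hBc.continuousWithinAt hrsIcc).continuousAt hIccn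
    exact (continuousAt_const.mul h1).add
      (((continuousAt_const.mul (h2.pow 2)).div continuousAt_id hrs.1.ne'))
  set ε : ℝ := -(2 * p' rs + (m:ℝ) ^ 2 * (Bθ rs) ^ 2 / rs) / 2 with hεdef
  have hε : 0 < ε := by rw [hεdef]; linarith
  have hev : ∀ᶠ r in nhds rs,
      (2 * p' r + (m:ℝ) ^ 2 * (Bθ r) ^ 2 / r < -ε) ∧ r ∈ Ioo (0:ℝ) r₀ := by
    refine Filter.Eventually.and ?_ (Ioo_mem_nhds hrs.1 hrs.2)
    exact Filter.Tendsto.eventually_lt_const (by rw [hεdef]; linarith) hgc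
  obtain ⟨δ₀, hδ₀, hδprop⟩ := Metric.eventually_nhds_iff.mp hev
  set δ : ℝ := δ₀ / 2 with hδdef
  have hδpos : 0 < δ := by positivity
  have key : ∀ r ∈ Icc (rs - δ) (rs + δ),
      (2 * p' r + (m:ℝ) ^ 2 * (Bθ r) ^ 2 / r < -ε) ∧ r ∈ Ioo (0:ℝ) r₀ := by
    intro r hr
    refine hδprop ?_
    rw [Real.dist_eq]
    have : |r - rs| ≤ δ := abs_le.mpr ⟨by linarith [hr.1], by linarith [hr.2]⟩
    have : δ < δ₀ := by rw [hδdef]; linarith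
    linarith [abs_le.mpr (show -(δ) ≤ r - rs ∧ r - rs ≤ δ from ⟨by linarith [hr.1], by linarith [hr.2]⟩)]
  have ha : 0 < rs - δ := (key (rs - δ) ⟨le_refl _, by linarith⟩).2.1
  have hb : rs + δ < r₀ := (key (rs + δ) ⟨by linarith, le_refl _⟩).2.2
  -- the bump function
  have hlt1 : (0:ℝ) < δ / 4 := by positivity
  have hlt2 : δ / 4 < δ / 2 := by linarith
  let f : ContDiffBump rs := ⟨δ / 4, δ / 2, hlt1, hlt2⟩
  set ξ : ℝ → ℝ := ⇑f with hξdef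
  have hξcd : ContDiff ℝ (⊤:ℕ∞) ξ := f.contDiff
  have hξc : Continuous ξ := hξcd.continuous
  have hξ'c : Continuous (deriv ξ) := hξcd.continuous_deriv (by exact_mod_cast le_top)
  have hts : tsupport ξ = Icc (rs - δ / 2) (rs + δ / 2) := by
    rw [hξdef, f.tsupport_eq, Real.closedBall_eq_Icc]
  -- vanishing outside the support
  have hsupp : ∀ r, r ∉ Icc (rs - δ / 2) (rs + δ / 2) → ξ r = 0 ∧ deriv ξ r = 0 := by
    intro r hr
    have hnm : r ∉ tsupport ξ := by rw [hts]; exact hr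
    refine ⟨image_eq_zero_of_notMem_tsupport hnm, ?_⟩
    by_contra hne
    exact hnm (support_deriv_subset (Function.mem_support.mpr hne))
  have hz1 : ∀ r, r < rs - δ → (ξ r - r * deriv ξ r) ^ 2 = 0 := by
    intro r hr
    obtain ⟨h1, h2⟩ := hsupp r (by intro hrm; have := hrm.1; simp only [mem_Icc] at hrm; linarith [hrm.1])
    rw [h1, h2, mul_zero, sub_zero]; ring
  have hz2 : ∀ r, r < rs - δ → (ξ r) ^ 2 = 0 := by
    intro r hr
    have h1 := (hsupp r (by simp only [mem_Icc, not_and_or, not_le]; left; linarith)).1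
    rw [h1]; ring
  -- sup bounds
  obtain ⟨xM, _, hxM0⟩ := isCompact_Icc.exists_isMaxOn (nonempty_Icc.mpr hr₀.le)
    ((hBc.pow 2) : ContinuousOn (fun r => (Bθ r) ^ 2) (Icc (0:ℝ) r₀))
  set M : ℝ := (Bθ xM) ^ 2 with hMdef
  have hM0 : 0 ≤ M := sq_nonneg _
  have hxM : ∀ r ∈ Icc (0:ℝ) r₀, (Bθ r) ^ 2 ≤ M := fun r hr => hxM0 hr
  have hhc : Continuous (fun r => (ξ r - r * deriv ξ r) ^ 2) :=
    ((hξc.sub (continuous_id.mul hξ'c)).pow 2)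
  obtain ⟨xC, _, hxC0⟩ := isCompact_Icc.exists_isMaxOn (nonempty_Icc.mpr hr₀.le)
    (hhc.continuousOn : ContinuousOn (fun r => (ξ r - r * deriv ξ r) ^ 2) (Icc (0:ℝ) r₀))
  set C : ℝ := (ξ xC - xC * deriv ξ xC) ^ 2 with hCdef
  have hC0 : 0 ≤ C := sq_nonneg _
  have hxC : ∀ r ∈ Icc (0:ℝ) r₀, (ξ r - r * deriv ξ r) ^ 2 ≤ C := fun r hr => hxC0 hr
  set C₁ : ℝ := (m:ℝ) ^ 2 * M * C / (rs - δ) ^ 3 with hC₁def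
  have hC₁ : 0 ≤ C₁ := by
    apply div_nonneg _ (le_of_lt (pow_pos ha 3))
    exact mul_nonneg (mul_nonneg (sq_nonneg _) hM0) hC0
  -- positivity of ∫ ξ²
  set J : ℝ := ∫ r in (0:ℝ)..r₀, (ξ r) ^ 2 with hJdef
  have hJ : 0 < J := by
    have h1 : (0:ℝ) < ∫ r in (rs - δ/4)..(rs + δ/4), (ξ r) ^ 2 := by
      refine intervalIntegral.intervalIntegral_pos_of_pos_on
        ((hξc.pow 2).intervalIntegrable _ _) ?_ (by linarith)
      intro x hx
      have : x ∈ Metric.ball rs (δ/2) := by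
        rw [Real.ball_eq_Ioo]
        exact ⟨by linarith [hx.1], by linarith [hx.2]⟩
      exact pow_pos (f.pos_of_mem_ball this) 2
    have h2 : (∫ r in (rs - δ/4)..(rs + δ/4), (ξ r) ^ 2) ≤ J := by
      refine intervalIntegral.integral_mono_interval (by linarith) (by linarith)
        (by linarith) ?_ ((hξc.pow 2).intervalIntegrable _ _)
      exact Filter.Eventually.of_forall fun x => sq_nonneg _
    linarith
  -- choice of K
  set K : ℝ := Real.sqrt (C₁ * r₀ / (ε * J)) + 1 with hKdef
  have hK : 0 < K := by positivity
  refine ⟨ξ, hξcd, by rw [hts]; intro x hx; exact ⟨by linarith [hx.1], by linarith [hx.2]⟩,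
    K, hK, ?_⟩
  intro k hk
  have hkne : k ≠ 0 := by
    intro h; rw [h, abs_zero] at hk; linarith
  have hk2 : 0 < k ^ 2 := pow_two_pos_of_ne_zero hkne
  -- second integral: integrability and bound
  have hint2 : IntervalIntegrable
      (fun r => (2 * p' r + (m:ℝ) ^ 2 * (Bθ r) ^ 2 / r) * (ξ r) ^ 2) volume 0 r₀ := by
    refine ContinuousOn.intervalIntegrable_of_Icc hr₀.le (cont_on_mul_aux ha ?_ (hξc.pow 2) hz2)
    intro x hx
    exact (continuousWithinAt_const.mul (hp'c.continuousWithinAt (Ioc_subset_Icc_self hx))).add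
      ((continuousWithinAt_const.mul ((hBc.continuousWithinAt (Ioc_subset_Icc_self hx)).pow 2)).div
        continuousWithinAt_id hx.1.ne')
  have hI2 : (∫ r in (0:ℝ)..r₀, (2 * p' r + (m:ℝ) ^ 2 * (Bθ r) ^ 2 / r) * (ξ r) ^ 2)
      ≤ -ε * J := by
    have hmono := intervalIntegral.integral_mono_on (f := fun r =>
        (2 * p' r + (m:ℝ) ^ 2 * (Bθ r) ^ 2 / r) * (ξ r) ^ 2)
      (g := fun r => -ε * (ξ r) ^ 2) hr₀.le hint2
      ((continuous_const.mul (hξc.pow 2)).intervalIntegrable _ _) ?_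
    · rw [intervalIntegral.integral_const_mul] at hmono
      exact hmono
    · intro x hx
      rcases eq_or_ne (ξ x) 0 with h0 | h0
      · simp [h0]
      · have hxs : x ∈ Icc (rs - δ/2) (rs + δ/2) := by
          by_contra hxn
          exact h0 (hsupp x hxn).1
        have hxi : x ∈ Icc (rs - δ) (rs + δ) :=
          ⟨by linarith [hxs.1], by linarith [hxs.2]⟩
        have := (key x hxi).1
        exact mul_le_mul_of_nonneg_right this.le (sq_nonneg _)
  -- first integral: integrability and bound
  have hint1 : IntervalIntegrable (fun r =>
      (m:ℝ) ^ 2 * (Bθ r) ^ 2 / (r * ((m:ℝ) ^ 2 + k ^ 2 * r ^ 2))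
        * (ξ r - r * deriv ξ r) ^ 2) volume 0 r₀ := by
    refine ContinuousOn.intervalIntegrable_of_Icc hr₀.le (cont_on_mul_aux ha ?_ hhc hz1)
    intro x hx
    have hden : x * ((m:ℝ) ^ 2 + k ^ 2 * x ^ 2) ≠ 0 := by
      have h1 : 0 < k ^ 2 * x ^ 2 := mul_pos hk2 (pow_two_pos_of_ne_zero hx.1.ne')
      have h2 : 0 < (m:ℝ) ^ 2 + k ^ 2 * x ^ 2 := by nlinarith [sq_nonneg ((m:ℝ))]
      exact (mul_pos hx.1 h2).ne'
    have hdenc : Continuous (fun r : ℝ => r * ((m:ℝ) ^ 2 + k ^ 2 * r ^ 2)) :=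
      continuous_id.mul (continuous_const.add (continuous_const.mul (continuous_pow 2)))
    exact (continuousWithinAt_const.mul
        ((hBc.continuousWithinAt (Ioc_subset_Icc_self hx)).pow 2)).div
      hdenc.continuousWithinAt hden
  have hI1 : (∫ r in (0:ℝ)..r₀,
      (m:ℝ) ^ 2 * (Bθ r) ^ 2 / (r * ((m:ℝ) ^ 2 + k ^ 2 * r ^ 2))
        * (ξ r - r * deriv ξ r) ^ 2) ≤ r₀ * (C₁ / k ^ 2) := by
    have hmono := intervalIntegral.integral_mono_on (f := fun r =>
        (m:ℝ) ^ 2 * (Bθ r) ^ 2 / (r * ((m:ℝ) ^ 2 + k ^ 2 * r ^ 2))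
          * (ξ r - r * deriv ξ r) ^ 2)
      (g := fun _ => C₁ / k ^ 2) hr₀.le hint1 (intervalIntegrable_const) ?_
    · rw [intervalIntegral.integral_const, smul_eq_mul, sub_zero] at hmono
      exact hmono
    · intro x hx
      rcases eq_or_ne (ξ x - x * deriv ξ x) 0 with h0 | h0
      · have : (0:ℝ) ≤ C₁ / k ^ 2 := div_nonneg hC₁ hk2.le
        simpa [h0] using this
      · have hxs : x ∈ Icc (rs - δ/2) (rs + δ/2) := by
          by_contra hxn
          obtain ⟨h1, h2⟩ := hsupp x hxn
          exact h0 (by rw [h1, h2, mul_zero, sub_zero])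
        have hax : rs - δ ≤ x := by linarith [hxs.1]
        have hx0 : 0 < x := lt_of_lt_of_le ha hax
        -- denominator bound
        have hd1 : k ^ 2 * (rs - δ) ^ 2 ≤ (m:ℝ) ^ 2 + k ^ 2 * x ^ 2 := by
          have h := mul_le_mul_of_nonneg_left (pow_le_pow_left₀ ha.le hax 2) (sq_nonneg k)
          linarith [sq_nonneg ((m:ℝ))]
        have hd2 : k ^ 2 * (rs - δ) ^ 3 ≤ x * ((m:ℝ) ^ 2 + k ^ 2 * x ^ 2) := by
          calc k ^ 2 * (rs - δ) ^ 3 = (rs - δ) * (k ^ 2 * (rs - δ) ^ 2) := by ring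
          _ ≤ x * ((m:ℝ) ^ 2 + k ^ 2 * x ^ 2) :=
            mul_le_mul hax hd1 (by positivity) hx0.le
        have hdpos : 0 < k ^ 2 * (rs - δ) ^ 3 := mul_pos hk2 (pow_pos ha 3)
        have hnum : (m:ℝ) ^ 2 * (Bθ x) ^ 2 ≤ (m:ℝ) ^ 2 * M :=
          mul_le_mul_of_nonneg_left (hxM x hx) (sq_nonneg _)
        have hdiv : (m:ℝ) ^ 2 * (Bθ x) ^ 2 / (x * ((m:ℝ) ^ 2 + k ^ 2 * x ^ 2))
            ≤ (m:ℝ) ^ 2 * M / (k ^ 2 * (rs - δ) ^ 3) :=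
          div_le_div₀ (mul_nonneg (sq_nonneg _) hM0) hnum hdpos hd2
        have hstep : (m:ℝ) ^ 2 * (Bθ x) ^ 2 / (x * ((m:ℝ) ^ 2 + k ^ 2 * x ^ 2))
            * (ξ x - x * deriv ξ x) ^ 2
            ≤ (m:ℝ) ^ 2 * M / (k ^ 2 * (rs - δ) ^ 3) * C :=
          mul_le_mul hdiv (hxC x hx) (sq_nonneg _)
            (div_nonneg (mul_nonneg (sq_nonneg _) hM0) hdpos.le)
        have heq : (m:ℝ) ^ 2 * M / (k ^ 2 * (rs - δ) ^ 3) * C = C₁ / k ^ 2 := by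
          rw [hC₁def, div_mul_eq_mul_div, div_div, mul_comm ((rs - δ) ^ 3) (k ^ 2)]
        rw [heq] at hstep
        exact hstep
  -- numeric conclusion
  have hkK : K ^ 2 ≤ k ^ 2 := by
    calc K ^ 2 ≤ |k| ^ 2 := pow_le_pow_left₀ hK.le hk 2
    _ = k ^ 2 := sq_abs k
  have hs0 : 0 ≤ C₁ * r₀ / (ε * J) := by positivity
  have hsK : C₁ * r₀ / (ε * J) < K ^ 2 := by
    rw [hKdef]
    have hq := Real.sq_sqrt hs0
    have hnn := Real.sqrt_nonneg (C₁ * r₀ / (ε * J))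
    have hexp : (Real.sqrt (C₁ * r₀ / (ε * J)) + 1) ^ 2
        = Real.sqrt (C₁ * r₀ / (ε * J)) ^ 2 + 2 * Real.sqrt (C₁ * r₀ / (ε * J)) + 1 := by ring
    rw [hexp, hq]
    linarith
  have hsk : C₁ * r₀ / (ε * J) < k ^ 2 := lt_of_lt_of_le hsK hkK
  have hAB : r₀ * (C₁ / k ^ 2) < ε * J := by
    have h1 : C₁ * r₀ < k ^ 2 * (ε * J) := by
      have := (div_lt_iff₀ (mul_pos hε hJ)).mp hsk
      linarith
    have h2 : r₀ * (C₁ / k ^ 2) = C₁ * r₀ / k ^ 2 := by ring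
    rw [h2]
    rw [div_lt_iff₀ hk2]
    linarith
  have hπ : (0:ℝ) < 2 * Real.pi ^ 2 := by positivity
  have e1 := mul_le_mul_of_nonneg_left hI1 hπ.le
  have e2 := mul_le_mul_of_nonneg_left hI2 hπ.le
  have e3 := mul_lt_mul_of_pos_left hAB hπ
  nlinarith [e1, e2, e3]
end

section
/- Fix r₀ > 0 and s₁ ∈ (0,r₀). Let J_z : [0,r₀] → ℝ be continuous, define B_θ(r) = (1/r) ∫₀^r s J_z(s) ds for r ∈ (0,r₀] (B_θ(0)=0) and p'(r) = −B_θ(r) J_z(r). Let ρ : [0,r₀] → [0,∞) be continuous with ρ(r) > 0 for r ∈ [0,s₁], and suppose there is C₀ > 0 such that |p'(r)| ≤ C₀ ρ(r) for all r ∈ [s₁,r₀]. Then there exists a constant C > 0 such that for every continuous function ξ : [0,r₀] → ℝ: | ∫₀^{r₀} p'(r) ξ(r)² dr | ≤ C ∫₀^{r₀} ρ(r) ξ(r)² r dr. -/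
open Set MeasureTheory

/-!
Near the axis the pressure gradient is small without any help from `ρ`: with `|J_z| ≤ M`,
`|B_θ(r)| ≤ M r / 2`, so `|p'(r)| ≤ M² r / 2`, and since `ρ` has a positive minimum `m` on
`[0, s₁]` this is at most `(M² / 2m) ρ(r) r`. Away from the axis, `r ≥ s₁` turns the
hypothesis `|p'| ≤ C₀ ρ` into `|p'(r)| ≤ (C₀ / s₁) ρ(r) r`. The pointwise bound
`|p'| ≤ K ρ r` on `(0, r₀]` then integrates against `ξ²`.
-/

/-- The azimuthal magnetic field `B_θ` generated by the axial current `J_z`. -/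
noncomputable def azimuthalField (J : ℝ → ℝ) (r : ℝ) : ℝ :=
  1 / r * ∫ s in (0:ℝ)..r, s * J s

lemma abs_integral_id_mul_le {J : ℝ → ℝ} {M r : ℝ} (hr : 0 ≤ r)
    (hJ : ∀ s ∈ Ioc 0 r, |J s| ≤ M) :
    |∫ s in (0:ℝ)..r, s * J s| ≤ M * r ^ 2 / 2 := by
  have hbound : ∀ s ∈ Ioc 0 r, ‖s * J s‖ ≤ M * s := fun s hs => by
    rw [Real.norm_eq_abs, abs_mul, abs_of_pos hs.1, mul_comm M]
    exact mul_le_mul_of_nonneg_left (hJ s hs) hs.1.le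
  calc |∫ s in (0:ℝ)..r, s * J s|
      ≤ ∫ s in (0:ℝ)..r, M * s :=
        intervalIntegral.norm_integral_le_of_norm_le hr (.of_forall hbound)
          ((continuous_const.mul continuous_id).intervalIntegrable 0 r)
    _ = M * r ^ 2 / 2 := by
        rw [intervalIntegral.integral_const_mul, integral_id]
        ring

lemma abs_azimuthalField_le {J : ℝ → ℝ} {M r : ℝ} (hr : 0 < r)
    (hJ : ∀ s ∈ Ioc 0 r, |J s| ≤ M) :
    |azimuthalField J r| ≤ M * r / 2 := by
  rw [azimuthalField, abs_mul, abs_of_pos (one_div_pos.2 hr)]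
  calc 1 / r * |∫ s in (0:ℝ)..r, s * J s| ≤ 1 / r * (M * r ^ 2 / 2) := by
        gcongr
        exact abs_integral_id_mul_le hr.le hJ
    _ = M * r / 2 := by field_simp

lemma abs_azimuthalField_mul_le {J : ℝ → ℝ} {M r : ℝ} (hr : 0 < r)
    (hJ : ∀ s ∈ Icc 0 r, |J s| ≤ M) :
    |azimuthalField J r * J r| ≤ M ^ 2 / 2 * r := by
  have hB := abs_azimuthalField_le hr fun s hs => hJ s (Ioc_subset_Icc_self hs)
  have hJr := hJ r ⟨hr.le, le_rfl⟩
  have hM : 0 ≤ M := (abs_nonneg _).trans hJr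
  rw [abs_mul]
  calc |azimuthalField J r| * |J r| ≤ M * r / 2 * M := by gcongr
    _ = M ^ 2 / 2 * r := by ring

lemma abs_le_max_mul_mul_of_near_far {f ρ : ℝ → ℝ} {s₁ r₀ a c m : ℝ} (hs₁ : 0 < s₁)
    (hm : 0 < m) (ha : 0 ≤ a) (hnear : ∀ r ∈ Ioc 0 s₁, |f r| ≤ a * r)
    (hρm : ∀ r ∈ Ioc 0 s₁, m ≤ ρ r) (hfar : ∀ r ∈ Icc s₁ r₀, |f r| ≤ c * ρ r)
    (hρ : ∀ r ∈ Ioc 0 r₀, 0 ≤ ρ r) :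
    ∀ r ∈ Ioc 0 r₀, |f r| ≤ max (c / s₁) (a / m) * (ρ r * r) := by
  intro r hr
  have hρr : 0 ≤ ρ r * r := mul_nonneg (hρ r hr) hr.1.le
  rcases le_or_gt r s₁ with hle | hgt
  · have hρ_ge : m ≤ ρ r := hρm r ⟨hr.1, hle⟩
    calc |f r| ≤ a * r := hnear r ⟨hr.1, hle⟩
      _ ≤ a / m * (ρ r * r) := by
        rw [div_mul_eq_mul_div, le_div_iff₀ hm]
        nlinarith [mul_nonneg ha hr.1.le]
      _ ≤ _ := by gcongr; exact le_max_right _ _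
  · have hf := hfar r ⟨hgt.le, hr.2⟩
    have hcρ : 0 ≤ c * ρ r := (abs_nonneg _).trans hf
    calc |f r| ≤ c * ρ r := hf
      _ ≤ c / s₁ * (ρ r * r) := by
        rw [div_mul_eq_mul_div, le_div_iff₀ hs₁]
        nlinarith
      _ ≤ _ := by gcongr; exact le_max_left _ _

lemma abs_integral_le_mul_integral_of_abs_le {f g : ℝ → ℝ} {a b K : ℝ} (hab : a ≤ b)
    (hg : IntervalIntegrable g volume a b) (h : ∀ x ∈ Ioc a b, |f x| ≤ K * g x) :
    |∫ x in a..b, f x| ≤ K * ∫ x in a..b, g x := by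
  rw [← intervalIntegral.integral_const_mul]
  exact intervalIntegral.norm_integral_le_of_norm_le (f := f) hab (.of_forall h)
    (hg.const_mul K)

theorem zpinch_pressure_term_dominated_general
    (r₀ s₁ : ℝ) (hr₀ : 0 < r₀) (hs₁ : s₁ ∈ Ioo (0:ℝ) r₀)
    (Jz Bθ p' ρ : ℝ → ℝ)
    (hJc : ContinuousOn Jz (Icc (0:ℝ) r₀))
    (hBθ : ∀ r ∈ Ioc (0:ℝ) r₀, Bθ r = (1 / r) * ∫ s in (0:ℝ)..r, s * Jz s)
    (hp' : ∀ r ∈ Icc (0:ℝ) r₀, p' r = -(Bθ r * Jz r))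
    (hρc : ContinuousOn ρ (Icc (0:ℝ) r₀))
    (hρnn : ∀ r ∈ Icc (0:ℝ) r₀, 0 ≤ ρ r)
    (hρpos : ∀ r ∈ Icc (0:ℝ) s₁, 0 < ρ r)
    (C₀ : ℝ)
    (hdom : ∀ r ∈ Icc s₁ r₀, |p' r| ≤ C₀ * ρ r) :
    ∃ C > 0, ∀ ξ : ℝ → ℝ, ContinuousOn ξ (Icc (0:ℝ) r₀) →
      |∫ r in (0:ℝ)..r₀, p' r * (ξ r) ^ 2| ≤
        C * ∫ r in (0:ℝ)..r₀, ρ r * (ξ r) ^ 2 * r := by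
  obtain ⟨hs₁0, hs₁r₀⟩ := hs₁
  have hs₁_sub : Icc 0 s₁ ⊆ Icc 0 r₀ := Icc_subset_Icc_right hs₁r₀.le
  obtain ⟨M, hM⟩ := isCompact_Icc.exists_bound_of_continuousOn hJc
  obtain ⟨m, hm, hρm⟩ := isCompact_Icc.exists_forall_le' (hρc.mono hs₁_sub) hρpos
  have hnear : ∀ r ∈ Ioc 0 s₁, |p' r| ≤ M ^ 2 / 2 * r := fun r hr => by
    have hr₀ : r ∈ Ioc 0 r₀ := ⟨hr.1, hr.2.trans hs₁r₀.le⟩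
    rw [hp' r (Ioc_subset_Icc_self hr₀), abs_neg, hBθ r hr₀]
    exact abs_azimuthalField_mul_le hr.1 fun s hs => hM s ⟨hs.1, hs.2.trans hr₀.2⟩
  have hpt := abs_le_max_mul_mul_of_near_far hs₁0 hm (by positivity) hnear
    (fun r hr => hρm r (Ioc_subset_Icc_self hr)) hdom
    (fun r hr => hρnn r (Ioc_subset_Icc_self hr))
  set K := max (C₀ / s₁) (M ^ 2 / 2 / m)
  refine ⟨max K 1, by positivity, fun ξ hξ => ?_⟩
  have hρξ : ContinuousOn (fun r => ρ r * ξ r ^ 2 * r) (Icc 0 r₀) := by fun_prop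
  have hI : 0 ≤ ∫ r in (0:ℝ)..r₀, ρ r * ξ r ^ 2 * r :=
    intervalIntegral.integral_nonneg hr₀.le fun r hr =>
      mul_nonneg (mul_nonneg (hρnn r hr) (sq_nonneg _)) hr.1
  calc |∫ r in (0:ℝ)..r₀, p' r * ξ r ^ 2|
      ≤ K * ∫ r in (0:ℝ)..r₀, ρ r * ξ r ^ 2 * r := by
        refine abs_integral_le_mul_integral_of_abs_le hr₀.le
          (hρξ.intervalIntegrable_of_Icc hr₀.le) fun r hr => ?_
        rw [abs_mul, abs_sq]
        nlinarith [mul_le_mul_of_nonneg_right (hpt r hr) (sq_nonneg (ξ r))]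
    _ ≤ max K 1 * ∫ r in (0:ℝ)..r₀, ρ r * ξ r ^ 2 * r := by gcongr; exact le_max_left _ _

/-- core estimate of Proposition 5.1. If the pressure gradient is dominated
by the density near the boundary, `|p'| ≤ C₀ ρ` on `[s₁,r₀]`, and `ρ > 0` on `[0,s₁]`, then
`| ∫₀^{r₀} p' ξ² dr | ≤ C ∫₀^{r₀} ρ ξ² r dr` for all continuous `ξ`. -/
theorem zpinch_pressure_term_dominated
    (r₀ s₁ : ℝ) (hr₀ : 0 < r₀) (hs₁ : s₁ ∈ Ioo (0:ℝ) r₀)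
    (Jz Bθ p' ρ : ℝ → ℝ)
    (hJc : ContinuousOn Jz (Icc (0:ℝ) r₀))
    (hBθ0 : Bθ 0 = 0)
    (hBθ : ∀ r ∈ Ioc (0:ℝ) r₀, Bθ r = (1 / r) * ∫ s in (0:ℝ)..r, s * Jz s)
    (hp' : ∀ r ∈ Icc (0:ℝ) r₀, p' r = -(Bθ r * Jz r))
    (hρc : ContinuousOn ρ (Icc (0:ℝ) r₀))
    (hρnn : ∀ r ∈ Icc (0:ℝ) r₀, 0 ≤ ρ r)
    (hρpos : ∀ r ∈ Icc (0:ℝ) s₁, 0 < ρ r)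
    (C₀ : ℝ) (hC₀ : 0 < C₀)
    (hdom : ∀ r ∈ Icc s₁ r₀, |p' r| ≤ C₀ * ρ r) :
    ∃ C > 0, ∀ ξ : ℝ → ℝ, ContinuousOn ξ (Icc (0:ℝ) r₀) →
      |∫ r in (0:ℝ)..r₀, p' r * (ξ r) ^ 2| ≤
        C * ∫ r in (0:ℝ)..r₀, ρ r * (ξ r) ^ 2 * r :=
  zpinch_pressure_term_dominated_general r₀ s₁ hr₀ hs₁ Jz Bθ p' ρ hJc hBθ hp' hρc hρnn hρpos C₀ hdom
end
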